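/- arXiv:2106.14558 — 16 statements merged into one kernel-verified Lean document; each statement's English description precedes it below -/
import Mathlib

section
/- Let f, g ∈ ℚ[t] be polynomials with deg f = 2 and deg g = 2. Then f·g divides f³ + g³ + 1 in ℚ[t] if and only if either g = −f − 1, or there exists a polynomial h ∈ ℚ[t] of degree 1 such that f = (1/2)(h² − h + 1) and g = (1/2)(h² + h + 1). -/
set_option maxHeartbeats 8000000

open Polynomial

private lemma rep2 (p : ℚ[X]) (hp : p.natDegree ≤ 2) :
    p = C (p.coeff 2) * X ^ 2 + C (p.coeff 1) * X + C (p.coeff 0) := by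
  ext n
  rcases n with _ | _ | _ | n
  · simp
  · simp [coeff_C]
  · simp [coeff_C, coeff_X_pow]
  · have h1 : p.coeff (n+3) = 0 := coeff_eq_zero_of_natDegree_lt (by omega)
    simp [h1, coeff_X_pow, coeff_C]

private lemma key_scalar (s2 s1 s0 d2 d1 d0 e2 e1 e0 : ℚ)
    (hs2 : s2 ≠ 0) (hN : s2^2 - d2^2 ≠ 0)
    (hE0 : (-4) + (-1)*d0^2*e0 + (-4)*s0*d0^2 + s0^2*e0 = 0)
    (hE1 : (-1)*d0^2*e1 + (-2)*d1*d0*e0 + (-8)*s0*d1*d0 + s0^2*e1 + (-4)*s1*d0^2 + 2*s1*s0*e0 = 0)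
    (hE2 : (-1)*d0^2*e2 + (-2)*d1*d0*e1 + (-1)*d1^2*e0 + (-2)*d2*d0*e0 + (-4)*s0*d1^2 + (-8)*s0*d2*d0 + s0^2*e2 + (-8)*s1*d1*d0 + 2*s1*s0*e1 + s1^2*e0 + (-4)*s2*d0^2 + 2*s2*s0*e0 = 0)
    (hE3 : (-2)*d1*d0*e2 + (-1)*d1^2*e1 + (-2)*d2*d0*e1 + (-2)*d2*d1*e0 + (-8)*s0*d2*d1 + (-4)*s1*d1^2 + (-8)*s1*d2*d0 + 2*s1*s0*e2 + s1^2*e1 + (-8)*s2*d1*d0 + 2*s2*s0*e1 + 2*s2*s1*e0 = 0)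
    (hE4 : (-1)*d1^2*e2 + (-2)*d2*d0*e2 + (-2)*d2*d1*e1 + (-1)*d2^2*e0 + (-4)*s0*d2^2 + (-8)*s1*d2*d1 + s1^2*e2 + (-4)*s2*d1^2 + (-8)*s2*d2*d0 + 2*s2*s0*e2 + 2*s2*s1*e1 + s2^2*e0 = 0)
    (hE5 : (-2)*d2*d1*e2 + (-1)*d2^2*e1 + (-4)*s1*d2^2 + (-8)*s2*d2*d1 + 2*s2*s1*e2 + s2^2*e1 = 0)
    (hE6 : (-1)*d2^2*e2 + (-4)*s2*d2^2 + s2^2*e2 = 0) :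
    d2 = 0 ∧ s2 = d1^2 ∧ s1 = 2*d1*d0 ∧ s0 = d0^2 + 1 := by
  have hs2p : s2^2 ≠ 0 := pow_ne_zero 2 hs2
  by_cases hd2 : d2 = 0
  · subst hd2
    have he2 : e2 = 0 := by
      have h : e2 * s2^2 = 0 := by linear_combination hE6
      exact (mul_eq_zero.mp h).resolve_right hs2p
    have he1 : e1 = 0 := by
      have h : e1 * s2^2 = 0 := by linear_combination hE5 - (2*s2*s1) * he2
      exact (mul_eq_zero.mp h).resolve_right hs2p
    have hd1 : d1 ≠ 0 := by
      intro hd1z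
      have he0 : e0 = 0 := by
        have h : e0 * s2^2 = 0 := by linear_combination hE4 - ((-1)*d1^2 + s1^2 + 2*s2*s0) * he2 - (2*s2*s1) * he1 - ((-4)*s2*d1) * hd1z
        exact (mul_eq_zero.mp h).resolve_right hs2p
      have hd0 : d0 = 0 := by
        have h : (4*s2) * d0^2 = 0 := by linear_combination -hE2 + ((-1)*d0^2 + s0^2) * he2 + ((-2)*d1*d0 + 2*s1*s0) * he1 + ((-1)*d1^2 + s1^2 + 2*s2*s0) * he0 + ((-4)*s0*d1 + (-8)*s1*d0) * hd1z
        have h2 := (mul_eq_zero.mp h).resolve_left (mul_ne_zero (by norm_num) hs2)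
        exact (pow_eq_zero_iff (by norm_num : (2:ℕ) ≠ 0)).mp h2
      have : (4:ℚ) = 0 := by linear_combination -hE0 + ((-1)*d0^2 + s0^2) * he0 + ((-4)*s0*d0) * hd0
      norm_num at this
    have hA4 : e0*s2 = 4*d1^2 := by
      have h : (e0*s2 - 4*d1^2) * s2 = 0 := by linear_combination hE4 - ((-1)*d1^2 + s1^2 + 2*s2*s0) * he2 - (2*s2*s1) * he1
      have h2 := (mul_eq_zero.mp h).resolve_right hs2
      linear_combination h2
    have halpha : s1*d1 = 2*s2*d0 := by
      have h : (4*d1) * (s1*d1 - 2*s2*d0) = 0 := by linear_combination hE3 - (2*s1) * hA4 - ((-2)*d1*d0 + 2*s1*s0) * he2 - ((-1)*d1^2 + s1^2 + 2*s2*s0) * he1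
      have h2 := (mul_eq_zero.mp h).resolve_left (mul_ne_zero (by norm_num) hd1)
      linear_combination h2
    have hdelta : s0*s2*d1^2 = d1^4 + s2^2*d0^2 := by
      have h : (4:ℚ) * (s0*s2*d1^2 - (d1^4 + s2^2*d0^2)) = 0 := by linear_combination s2 * hE2 - (s1^2+2*s2*s0-d1^2) * hA4 - (4*s1*d1) * halpha - ((-1)*s2*d0^2 + s2*s0^2) * he2 - ((-2)*s2*d1*d0 + 2*s2*s1*s0) * he1
      linear_combination h / 4
    have hgam : d1^2*s0^2 - d1^2*d0^2 - s2*s0*d0^2 - s2 = 0 := by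
      linear_combination (s2 * hE0 - (s0^2-d0^2) * hA4) / 4
    have hk : d1^6 = s2^3 := by
      have h : d1^2 * (d1^6 - s2^3) = 0 := by linear_combination s2^2*d1^2 * hgam - (s0*s2*d1^2 + d1^4) * hdelta
      have h2 := (mul_eq_zero.mp h).resolve_left (pow_ne_zero 2 hd1)
      linear_combination h2
    have hs2d : s2 = d1^2 := by
      have h : (d1^2 - s2) * (d1^4 + d1^2*s2 + s2^2) = 0 := by linear_combination hk
      have hpos : d1^4 + d1^2*s2 + s2^2 ≠ 0 := by
        intro hh
        have h1 : 0 < d1^4 := by positivity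
        nlinarith [sq_nonneg (2*s2 + d1^2)]
      have h2 := (mul_eq_zero.mp h).resolve_right hpos
      linear_combination -h2
    have hs1d : s1 = 2*d1*d0 := by
      have h : d1 * (s1 - 2*d1*d0) = 0 := by linear_combination halpha + (2*d0) * hs2d
      have h2 := (mul_eq_zero.mp h).resolve_left hd1
      linear_combination h2
    have hs0d : s0 = d0^2 + 1 := by
      have h : d1^4 * (s0 - (d0^2 + 1)) = 0 := by linear_combination hdelta + (d0^2*(s2+d1^2) - s0*d1^2) * hs2d
      have h2 := (mul_eq_zero.mp h).resolve_left (pow_ne_zero 4 hd1)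
      linear_combination h2
    exact ⟨rfl, hs2d, hs1d, hs0d⟩
  · exfalso
    have hB3 : e2*(s2^2 - d2^2) = 4*s2*d2^2 := by linear_combination hE6
    have hCN : (e2 + 4*s2)*(s2^2 - d2^2) = 4*s2^3 := by linear_combination hB3
    have hA21 : (s2^2 - d2^2)*(e1*s2 - e2*s1) = 2*d2*((e2 + 4*s2)*(d1*s2 - d2*s1)) := by linear_combination s2 * hE5 - (3*s1) * hE6
    by_cases hR1 : d1*s2 - d2*s1 = 0
    · have hM1 : e1*s2 - e2*s1 = 0 := by
        have h : (s2^2 - d2^2)*(e1*s2 - e2*s1) = 0 := by linear_combination hA21 + (2*d2*(e2 + 4*s2)) * hR1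
        exact (mul_eq_zero.mp h).resolve_left hN
      have hB : ((s2^2 - d2^2)*(e0*s2 - e2*s0) - 2*d2*(e2 + 4*s2)*(d0*s2 - d2*s0)) = 0 := by
        have h : s2 * ((s2^2 - d2^2)*(e0*s2 - e2*s0) - 2*d2*(e2 + 4*s2)*(d0*s2 - d2*s0)) = 0 := by
          linear_combination s2^2 * hE4 - (2*s1*s2) * hE5 + (3*s1^2 - 3*s2*s0) * hE6 + ((e2 + 4*s2)*(d1*s2 - d2*s1) + 2*d2*(e1*s2 - e2*s1)) * hR1
        exact (mul_eq_zero.mp h).resolve_left hs2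
      have hY1 : (e2 + 4*s2)*(d0*s2 - d2*s0)^2 + 2*d2*(e0*s2 - e2*s0)*(d0*s2 - d2*s0) = 0 := by
        have h : s2^3 * ((e2 + 4*s2)*(d0*s2 - d2*s0)^2 + 2*d2*(e0*s2 - e2*s0)*(d0*s2 - d2*s0)) = 0 := by
          linear_combination (-s2^5) * hE2 + ((-3)*s2^2*s1^2*s0 + 3*s2^3*s0^2) * hE6 + (2*s2^3*s1*s0) * hE5 + (s2^2*s1^2 + 2*s2^3*s0) * hB - ((-4)*s2^2*s1*s0*d2*e2 + s2^3*s1*d2*e0 + (-12)*s2^3*s1*s0*d2 + 2*s2^4*d0*e1 + s2^4*d1*e0 + 4*s2^4*s0*d1 + 8*s2^4*s1*d0) * hR1 - ((-2)*s2^2*s1*s0*d2^2 + 2*s2^3*s1*d2*d0) * hM1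
        exact (mul_eq_zero.mp h).resolve_left (pow_ne_zero 3 hs2)
      have hY0 : (e0*s2 - e2*s0)*(d0*s2 - d2*s0)^2 + 4*s2^3 = 0 := by
        linear_combination (-s2^3) * hE0 + s0^3 * hE6 + s0^2 * hB - s0 * hY1
      have hs23 : (4:ℚ)*s2^3 ≠ 0 := mul_ne_zero (by norm_num) (pow_ne_zero 3 hs2)
      rcases eq_or_ne ((d0*s2 - d2*s0) : ℚ) 0 with hR0 | hR0
      · exact hs23 (by linear_combination hY0 - ((e0*s2 - e2*s0)*(d0*s2 - d2*s0)) * hR0)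
      · have hctR0 : (e2 + 4*s2)*(d0*s2 - d2*s0) + 2*d2*(e0*s2 - e2*s0) = 0 := by
          have h : ((e2 + 4*s2)*(d0*s2 - d2*s0) + 2*d2*(e0*s2 - e2*s0)) * (d0*s2 - d2*s0) = 0 := by linear_combination hY1
          exact (mul_eq_zero.mp h).resolve_right hR0
        have hM0 : (e0*s2 - e2*s0) = 0 := by
          have h : (e0*s2 - e2*s0) * (s2^2 + 3*d2^2) = 0 := by linear_combination hB + (2*d2) * hctR0
          refine (mul_eq_zero.mp h).resolve_right ?_
          have h1 : 0 < s2^2 := lt_of_le_of_ne (sq_nonneg s2) (Ne.symm hs2p)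
          intro hh; nlinarith [sq_nonneg d2]
        exact hs23 (by linear_combination hY0 - (d0*s2 - d2*s0)^2 * hM0)
    · have hX4 : (s2*((s2^2 - d2^2)*(e0*s2 - e2*s0) - 2*d2*(e2 + 4*s2)*(d0*s2 - d2*s0)) - (e2 + 4*s2)*(d1*s2 - d2*s1)^2 - 2*d2*(e1*s2 - e2*s1)*(d1*s2 - d2*s1)) = 0 := by
        linear_combination s2^2 * hE4 - (2*s2*s1) * hE5 + (3*s1^2 - 3*s2*s0) * hE6
      have hX3 : (2*((s2^2 - d2^2)*(e0*s2 - e2*s0) - 2*d2*(e2 + 4*s2)*(d0*s2 - d2*s0))*(s2*(s1*(d1*s2 - d2*s1) - 2*s2*(d0*s2 - d2*s0)))*s2 - ((e2 + 4*s2)*(d1*s2 - d2*s1) + 2*d2*(e1*s2 - e2*s1))*(s2*(s1*(d1*s2 - d2*s1) - 2*s2*(d0*s2 - d2*s0)))*(d1*s2 - d2*s1) - 2*d2*s2^2*((e0*s2 - e2*s0)*(d1*s2 - d2*s1) - (e1*s2 - e2*s1)*(d0*s2 - d2*s0))*(d1*s2 - d2*s1) - (e1*s2 - e2*s1)*s2*(d1*s2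 - d2*s1)^3) = 0 := by
        linear_combination (s2^4*(d1*s2 - d2*s1)) * hE3 + (-4*s2^4*(d0*s2 - d2*s0)) * hE4 + (-(s2^2*s1^2*(d1*s2 - d2*s1)) - 2*s2^3*s0*(d1*s2 - d2*s1) + 8*s2^3*s1*(d0*s2 - d2*s0)) * hE5 + (2*s2*s1^3*(d1*s2 - d2*s1) - 12*s2^2*s1^2*(d0*s2 - d2*s0) + 12*s2^3*s0*(d0*s2 - d2*s0)) * hE6
      have hX2 : (((s2^2 - d2^2)*(e0*s2 - e2*s0) - 2*d2*(e2 + 4*s2)*(d0*s2 - d2*s0))*(s2*(s1*(d1*s2 - d2*s1) - 2*s2*(d0*s2 - d2*s0)))^2 + 2*((s2^2 - d2^2)*(e0*s2 - e2*s0) - 2*d2*(e2 + 4*s2)*(d0*s2 - d2*s0))*(s0*(d1*s2 - d2*s1)^2 - s1*(d1*s2 - d2*s1)*(d0*s2 - d2*s0) + s2*(d0*s2 - d2*s0)^2)*s2^3 - ((e2 + 4*s2)*(d1*s2 - d2*s1) + 2*d2*(e1*s2 - e2*s1))*(s0*(d1*s2 - d2*s1)^2 - s1*(d1*s2 - d2*s1)*(d0*s2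 - d2*s0) + s2*(d0*s2 - d2*s0)^2)*s2^2*(d1*s2 - d2*s1) - 2*d2*((e0*s2 - e2*s0)*(d1*s2 - d2*s1) - (e1*s2 - e2*s1)*(d0*s2 - d2*s0))*(s2*(s1*(d1*s2 - d2*s1) - 2*s2*(d0*s2 - d2*s0)))*s2*(d1*s2 - d2*s1) - ((e0*s2 - e2*s0)*(d1*s2 - d2*s1) - (e1*s2 - e2*s1)*(d0*s2 - d2*s0))*s2^2*(d1*s2 - d2*s1)^3) = 0 := by
        linear_combination (s2^5*(d1*s2 - d2*s1)^2) * hE2 + (-3*s2^5*(d1*s2 - d2*s1)*(d0*s2 - d2*s0)) * hE3 + (6*s2^5*(d0*s2 - d2*s0)^2) * hE4 + (-2*s2^3*s1*s0*(d1*s2 - d2*s1)^2 + 3*s2^3*s1^2*(d1*s2 - d2*s1)*(d0*s2 - d2*s0) + 6*s2^4*s0*(d1*s2 - d2*s1)*(d0*s2 - d2*s0) - 12*s2^4*s1*(d0*s2 - d2*s0)^2) * hE5 + (3*s2^2*s1^2*s0*(d1*s2 - d2*s1)^2 - 6*s2^2*s1^3*(d1*s2 - d2*s1)*(d0*s2 -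 d2*s0) - 3*s2^3*s0^2*(d1*s2 - d2*s1)^2 + 18*s2^3*s1^2*(d0*s2 - d2*s0)^2 - 18*s2^4*s0*(d0*s2 - d2*s0)^2) * hE6
      have hX1 : (s0*(d1*s2 - d2*s1)^2 - s1*(d1*s2 - d2*s1)*(d0*s2 - d2*s0) + s2*(d0*s2 - d2*s0)^2)*(((s2^2 - d2^2)*(e0*s2 - e2*s0) - 2*d2*(e2 + 4*s2)*(d0*s2 - d2*s0))*(s2*(s1*(d1*s2 - d2*s1) - 2*s2*(d0*s2 - d2*s0))) - d2*s2*((e0*s2 - e2*s0)*(d1*s2 - d2*s1) - (e1*s2 - e2*s1)*(d0*s2 - d2*s0))*(d1*s2 - d2*s1)) = 0 := by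
        have h : s2 * ((s0*(d1*s2 - d2*s1)^2 - s1*(d1*s2 - d2*s1)*(d0*s2 - d2*s0) + s2*(d0*s2 - d2*s0)^2)*(((s2^2 - d2^2)*(e0*s2 - e2*s0) - 2*d2*(e2 + 4*s2)*(d0*s2 - d2*s0))*(s2*(s1*(d1*s2 - d2*s1) - 2*s2*(d0*s2 - d2*s0))) - d2*s2*((e0*s2 - e2*s0)*(d1*s2 - d2*s1) - (e1*s2 - e2*s1)*(d0*s2 - d2*s0))*(d1*s2 - d2*s1))) = 0 := by
          linear_combination ((1/2)*s2^5*(d1*s2 - d2*s1)^3) * hE1 + (-(1/2)*s2^3*s0^2*(d1*s2 - d2*s1)^3) * hE5 + (-(d0*s2 - d2*s0)) * hX2 + (-(3/2)*s2*(d0*s2 - d2*s0)^2) * hX3 + (-2*s2^3*(d0*s2 - d2*s0)^3) * hX4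
        exact (mul_eq_zero.mp h).resolve_left hs2
      have hX0 : ((s2^2 - d2^2)*(e0*s2 - e2*s0) - 2*d2*(e2 + 4*s2)*(d0*s2 - d2*s0))*(s0*(d1*s2 - d2*s1)^2 - s1*(d1*s2 - d2*s1)*(d0*s2 - d2*s0) + s2*(d0*s2 - d2*s0)^2)^2 = 4*s2^3*(d1*s2 - d2*s1)^4 := by
        have h : s2^2 * (((s2^2 - d2^2)*(e0*s2 - e2*s0) - 2*d2*(e2 + 4*s2)*(d0*s2 - d2*s0))*(s0*(d1*s2 - d2*s1)^2 - s1*(d1*s2 - d2*s1)*(d0*s2 - d2*s0) + s2*(d0*s2 - d2*s0)^2)^2 - 4*s2^3*(d1*s2 - d2*s1)^4) = 0 := by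
          linear_combination (s2^5*(d1*s2 - d2*s1)^4) * hE0 + (-(s2^2*s0^3*(d1*s2 - d2*s1)^4)) * hE6 + (-2*s2*(d0*s2 - d2*s0)) * hX1 + (-(d0*s2 - d2*s0)^2) * hX2 + (-(s2*(d0*s2 - d2*s0)^3)) * hX3 + (-(s2^3*(d0*s2 - d2*s0)^4)) * hX4
        have h2 := (mul_eq_zero.mp h).resolve_left hs2p
        linear_combination h2
      have h4R : (4:ℚ)*s2^3*(d1*s2 - d2*s1)^4 ≠ 0 := mul_ne_zero (mul_ne_zero (by norm_num) (pow_ne_zero 3 hs2)) (pow_ne_zero 4 hR1)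
      have hWne : (s0*(d1*s2 - d2*s1)^2 - s1*(d1*s2 - d2*s1)*(d0*s2 - d2*s0) + s2*(d0*s2 - d2*s0)^2) ≠ 0 := by
        intro hh; exact h4R (by linear_combination -hX0 + (((s2^2 - d2^2)*(e0*s2 - e2*s0) - 2*d2*(e2 + 4*s2)*(d0*s2 - d2*s0))*(s0*(d1*s2 - d2*s1)^2 - s1*(d1*s2 - d2*s1)*(d0*s2 - d2*s0) + s2*(d0*s2 - d2*s0)^2)) * hh)
      have hBQ : ((s2^2 - d2^2)*(e0*s2 - e2*s0) - 2*d2*(e2 + 4*s2)*(d0*s2 - d2*s0))*(s2*(s1*(d1*s2 - d2*s1) - 2*s2*(d0*s2 - d2*s0))) - d2*s2*((e0*s2 - e2*s0)*(d1*s2 - d2*s1) - (e1*s2 - e2*s1)*(d0*s2 - d2*s0))*(d1*s2 - d2*s1) = 0 := (mul_eq_zero.mp hX1).resolve_left hWne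
      have hW9 : ((s2^2 - d2^2)*(e0*s2 - e2*s0) - 2*d2*(e2 + 4*s2)*(d0*s2 - d2*s0))*(s2*(s1*(d1*s2 - d2*s1) - 2*s2*(d0*s2 - d2*s0))) - 2*d2*s2*((e0*s2 - e2*s0)*(d1*s2 - d2*s1) - (e1*s2 - e2*s1)*(d0*s2 - d2*s0))*(d1*s2 - d2*s1) - (e1*s2 - e2*s1)*(d1*s2 - d2*s1)^3 = 0 := by
        have h : s2 * (((s2^2 - d2^2)*(e0*s2 - e2*s0) - 2*d2*(e2 + 4*s2)*(d0*s2 - d2*s0))*(s2*(s1*(d1*s2 - d2*s1) - 2*s2*(d0*s2 - d2*s0))) - 2*d2*s2*((e0*s2 - e2*s0)*(d1*s2 - d2*s1) - (e1*s2 - e2*s1)*(d0*s2 - d2*s0))*(d1*s2 - d2*s1) - (e1*s2 - e2*s1)*(d1*s2 - d2*s1)^3) = 0 := by linear_combination hX3 - (s2*(s1*(d1*s2 - d2*s1) - 2*s2*(d0*s2 - d2*s0))) * hX4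
        exact (mul_eq_zero.mp h).resolve_left hs2
      have hM1D : d2*s2*((e0*s2 - e2*s0)*(d1*s2 - d2*s1) - (e1*s2 - e2*s1)*(d0*s2 - d2*s0)) + (e1*s2 - e2*s1)*(d1*s2 - d2*s1)^2 = 0 := by
        have h : (d1*s2 - d2*s1) * (d2*s2*((e0*s2 - e2*s0)*(d1*s2 - d2*s1) - (e1*s2 - e2*s1)*(d0*s2 - d2*s0)) + (e1*s2 - e2*s1)*(d1*s2 - d2*s1)^2) = 0 := by linear_combination -hW9 + hBQ
        exact (mul_eq_zero.mp h).resolve_left hR1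
      have hND : (s2^2 - d2^2)*((e0*s2 - e2*s0)*(d1*s2 - d2*s1) - (e1*s2 - e2*s1)*(d0*s2 - d2*s0)) = (d1*s2 - d2*s1)*((s2^2 - d2^2)*(e0*s2 - e2*s0) - 2*d2*(e2 + 4*s2)*(d0*s2 - d2*s0)) := by linear_combination (-(d0*s2 - d2*s0)) * hA21
      have hKey : s2*((s2^2 - d2^2)*(e0*s2 - e2*s0) - 2*d2*(e2 + 4*s2)*(d0*s2 - d2*s0)) + 2*(e2 + 4*s2)*(d1*s2 - d2*s1)^2 = 0 := by
        have h : d2 * ((d1*s2 - d2*s1) * (s2*((s2^2 - d2^2)*(e0*s2 - e2*s0) - 2*d2*(e2 + 4*s2)*(d0*s2 - d2*s0)) + 2*(e2 + 4*s2)*(d1*s2 - d2*s1)^2)) = 0 := by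
          linear_combination (s2^2 - d2^2) * hM1D - (d1*s2 - d2*s1)^2 * hA21 - (s2*d2) * hND
        have h2 := (mul_eq_zero.mp h).resolve_left hd2
        exact (mul_eq_zero.mp h2).resolve_left hR1
      have hKey2 : 3*(e2 + 4*s2)*(d1*s2 - d2*s1) + 2*d2*(e1*s2 - e2*s1) = 0 := by
        have h : (d1*s2 - d2*s1) * (3*(e2 + 4*s2)*(d1*s2 - d2*s1) + 2*d2*(e1*s2 - e2*s1)) = 0 := by linear_combination hKey - hX4
        exact (mul_eq_zero.mp h).resolve_left hR1
      have hfin : ((e2 + 4*s2)*(d1*s2 - d2*s1))*(3*s2^2 + d2^2) = 0 := by linear_combination (s2^2 - d2^2) * hKey2 - (2*d2) * hA21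
      have hpos : 3*s2^2 + d2^2 ≠ 0 := by
        have h1 : 0 < s2^2 := lt_of_le_of_ne (sq_nonneg s2) (Ne.symm hs2p)
        intro hh; nlinarith [sq_nonneg d2]
      have hct : (e2 + 4*s2) = 0 := by
        have h2 := (mul_eq_zero.mp hfin).resolve_right hpos
        exact (mul_eq_zero.mp h2).resolve_right hR1
      have : (4:ℚ)*s2^3 = 0 := by linear_combination -hCN + (s2^2 - d2^2) * hct
      exact (mul_ne_zero (by norm_num : (4:ℚ) ≠ 0) (pow_ne_zero 3 hs2)) this


theorem cubic_congruence_deg2_deg2 (f g : ℚ[X])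
    (hf : f.natDegree = 2) (hg : g.natDegree = 2) :
    f * g ∣ f ^ 3 + g ^ 3 + 1 ↔
      g = -f - 1 ∨
        ∃ h : ℚ[X], h.natDegree = 1 ∧
          f = C (1/2 : ℚ) * (h ^ 2 - h + 1) ∧
          g = C (1/2 : ℚ) * (h ^ 2 + h + 1) := by
  have hc2 : (C (1/2 : ℚ)) * 2 = 1 := by
    rw [show (2:ℚ[X]) = C 2 from (map_ofNat C 2).symm, ← map_mul]
    norm_num
  constructor
  · intro hdvd
    obtain ⟨qq, hq⟩ := hdvd
    by_cases hs31 : (f+g)^3 + 1 = 0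
    · left
      have h1 : ((f+g) + 1) * ((f+g)^2 - (f+g) + 1) = 0 := by linear_combination hs31
      rcases mul_eq_zero.mp h1 with h2 | h2
      · linear_combination h2
      · exfalso
        have h3 := congrArg (Polynomial.eval (0:ℚ)) h2
        simp only [eval_add, eval_sub, eval_pow, eval_one, eval_zero] at h3
        nlinarith [sq_nonneg (2 * ((f+g).eval 0) - 1), h3]
    · right
      have hf0 : f ≠ 0 := fun h => by simp [h] at hf
      have hg0 : g ≠ 0 := fun h => by simp [h] at hg
      have hfg0 : f * g ≠ 0 := mul_ne_zero hf0 hg0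
      have hw : f * g * (qq + 3*(f+g)) = (f+g)^3 + 1 := by linear_combination -hq
      have hwne : qq + 3*(f+g) ≠ 0 := by
        intro h; rw [h, mul_zero] at hw; exact hs31 hw.symm
      have hdfg : (f*g).natDegree = 4 := by rw [natDegree_mul hf0 hg0, hf, hg]
      have hdegs_le : (f+g).natDegree ≤ 2 :=
        le_trans (natDegree_add_le f g) (by rw [hf, hg]; norm_num)
      have hs2deg : (f+g).natDegree = 2 := by
        by_contra hne
        have hle1 : (f+g).natDegree ≤ 1 := by omega
        have hb : ((f+g)^3).natDegree ≤ 3 := by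
          refine le_trans (natDegree_pow_le) ?_
          omega
        have h1 : ((f+g)^3 + 1).natDegree ≤ 3 :=
          le_trans (natDegree_add_le _ _) (by simpa using hb)
        have h2 : 4 ≤ ((f+g)^3+1).natDegree := by
          rw [← hw, natDegree_mul hfg0 hwne, hdfg]; omega
        omega
      have hsne : f + g ≠ 0 := fun h => by rw [h] at hs2deg; simp at hs2deg
      have hd36 : ((f+g)^3).natDegree = 6 := by rw [natDegree_pow, hs2deg]
      have hd6 : ((f+g)^3+1).natDegree = 6 := by
        rw [show (1:ℚ[X]) = C 1 from (map_one C).symm]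
        rw [natDegree_add_C]
        exact hd36
      have hwdeg : (qq + 3*(f+g)).natDegree = 2 := by
        have h1 := natDegree_mul hfg0 hwne
        rw [hw, hd6, hdfg] at h1
        omega
      have hqdeg : qq.natDegree ≤ 2 := by
        have h1 : (3*(f+g)).natDegree ≤ 2 :=
          le_trans natDegree_mul_le (by simpa using hdegs_le)
        have h2 : qq = (qq + 3*(f+g)) - 3*(f+g) := by ring
        rw [h2]
        exact le_trans (natDegree_sub_le _ _) (max_le (le_of_eq hwdeg) h1)
      have hdle : (g - f).natDegree ≤ 2 :=
        le_trans (natDegree_sub_le g f) (by rw [hf, hg]; norm_num)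
      have hele : (qq - (f+g)).natDegree ≤ 2 :=
        le_trans (natDegree_sub_le _ _) (max_le hqdeg hdegs_le)
      have hme : (qq - (f+g)) * ((f+g)^2 - (g-f)^2) = 4*((f+g)*(g-f)^2 + 1) := by
        linear_combination (-4 : ℚ[X]) * hq
      have hsrep := rep2 (f+g) hdegs_le
      have hdrep := rep2 (g-f) hdle
      have herep := rep2 (qq - (f+g)) hele
      set sc2 := (f+g).coeff 2 with hsc2def
      set sc1 := (f+g).coeff 1 with hsc1def
      set sc0 := (f+g).coeff 0 with hsc0def
      set dc2 := (g-f).coeff 2 with hdc2def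
      set dc1 := (g-f).coeff 1 with hdc1def
      set dc0 := (g-f).coeff 0 with hdc0def
      set ec2 := (qq - (f+g)).coeff 2 with hec2def
      set ec1 := (qq - (f+g)).coeff 1 with hec1def
      set ec0 := (qq - (f+g)).coeff 0 with hec0def
      have hsc2 : sc2 ≠ 0 := by
        rw [hsc2def, ← hs2deg]
        exact leadingCoeff_ne_zero.mpr hsne
      have hslead : (f+g).leadingCoeff = sc2 := by
        rw [hsc2def, ← hs2deg]; rfl
      have hsco : ((f+g)^2).coeff 4 = sc2^2 := by
        have h1 := coeff_mul_degree_add_degree (f+g) (f+g)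
        rw [hs2deg, hslead] at h1
        calc ((f+g)^2).coeff 4 = ((f+g)*(f+g)).coeff (2+2) := by rw [pow_two]
        _ = sc2^2 := by rw [h1]; ring
      have hdco : ((g-f)^2).coeff 4 = dc2^2 := by
        rcases eq_or_ne ((g-f).natDegree) 2 with hd2d | hd2d
        · have hdlead : (g-f).leadingCoeff = dc2 := by rw [hdc2def, ← hd2d]; rfl
          have h1 := coeff_mul_degree_add_degree (g-f) (g-f)
          rw [hd2d, hdlead] at h1
          calc ((g-f)^2).coeff 4 = ((g-f)*(g-f)).coeff (2+2) := by rw [pow_two]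
          _ = dc2^2 := by rw [h1]; ring
        · have hle1 : (g-f).natDegree ≤ 1 := by omega
          have h1 : ((g-f)^2).coeff 4 = 0 := by
            refine coeff_eq_zero_of_natDegree_lt (lt_of_le_of_lt natDegree_pow_le ?_)
            omega
          have h2 : dc2 = 0 := by
            rw [hdc2def]
            exact coeff_eq_zero_of_natDegree_lt (by omega)
          rw [h1, h2]; ring
      have hNne : sc2^2 - dc2^2 ≠ 0 := by
        have hsq : (f+g)^2 - (g-f)^2 = C 4 * (f*g) := by
          rw [show (C (4:ℚ)) = 4 from map_ofNat C 4]; ring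
        have hco : ((f+g)^2).coeff 4 - ((g-f)^2).coeff 4 = 4 * (f*g).coeff 4 := by
          have h1 := congrArg (fun p => p.coeff 4) hsq
          simpa [coeff_sub, coeff_C_mul] using h1
        have hfgco : (f*g).coeff 4 = f.leadingCoeff * g.leadingCoeff := by
          have h1 := coeff_mul_degree_add_degree f g
          rw [hf, hg] at h1
          simpa using h1
        have key : sc2^2 - dc2^2 = 4*(f.leadingCoeff * g.leadingCoeff) := by
          rw [← hsco, ← hdco, hco, hfgco]
        rw [key]
        exact mul_ne_zero (by norm_num)
          (mul_ne_zero (leadingCoeff_ne_zero.mpr hf0) (leadingCoeff_ne_zero.mpr hg0))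
      rw [herep, hdrep, hsrep] at hme
      have V0 := congrArg (Polynomial.eval (0:ℚ)) hme
      have V1 := congrArg (Polynomial.eval (1:ℚ)) hme
      have Vm1 := congrArg (Polynomial.eval (-1:ℚ)) hme
      have V2 := congrArg (Polynomial.eval (2:ℚ)) hme
      have Vm2 := congrArg (Polynomial.eval (-2:ℚ)) hme
      have V3 := congrArg (Polynomial.eval (3:ℚ)) hme
      have Vm3 := congrArg (Polynomial.eval (-3:ℚ)) hme
      simp only [eval_mul, eval_add, eval_sub, eval_pow, eval_C, eval_X, eval_one,
        eval_ofNat] at V0 V1 Vm1 V2 Vm2 V3 Vm3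
      have hE0 : (-4) + (-1)*dc0^2*ec0 + (-4)*sc0*dc0^2 + sc0^2*ec0 = 0 := by linear_combination V0
      have hE1 : (-1)*dc0^2*ec1 + (-2)*dc1*dc0*ec0 + (-8)*sc0*dc1*dc0 + sc0^2*ec1 + (-4)*sc1*dc0^2 + 2*sc1*sc0*ec0 = 0 := by linear_combination (3/4)*V1 - (3/4)*Vm1 - (3/20)*V2 + (3/20)*Vm2 + (1/60)*V3 - (1/60)*Vm3
      have hE2 : (-1)*dc0^2*ec2 + (-2)*dc1*dc0*ec1 + (-1)*dc1^2*ec0 + (-2)*dc2*dc0*ec0 + (-4)*sc0*dc1^2 + (-8)*sc0*dc2*dc0 + sc0^2*ec2 + (-8)*sc1*dc1*dc0 + 2*sc1*sc0*ec1 + sc1^2*ec0 + (-4)*sc2*dc0^2 + 2*sc2*sc0*ec0 = 0 := by linear_combination (-49/36)*V0 + (3/4)*V1 + (3/4)*Vm1 - (3/40)*V2 - (3/40)*Vm2 + (1/180)*V3 + (1/180)*Vm3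
      have hE3 : (-2)*dc1*dc0*ec2 + (-1)*dc1^2*ec1 + (-2)*dc2*dc0*ec1 + (-2)*dc2*dc1*ec0 + (-8)*sc0*dc2*dc1 + (-4)*sc1*dc1^2 + (-8)*sc1*dc2*dc0 + 2*sc1*sc0*ec2 + sc1^2*ec1 + (-8)*sc2*dc1*dc0 + 2*sc2*sc0*ec1 + 2*sc2*sc1*ec0 = 0 := by linear_combination (-13/48)*V1 + (13/48)*Vm1 + (1/6)*V2 - (1/6)*Vm2 - (1/48)*V3 + (1/48)*Vm3
      have hE4 : (-1)*dc1^2*ec2 + (-2)*dc2*dc0*ec2 + (-2)*dc2*dc1*ec1 + (-1)*dc2^2*ec0 + (-4)*sc0*dc2^2 + (-8)*sc1*dc2*dc1 + sc1^2*ec2 + (-4)*sc2*dc1^2 + (-8)*sc2*dc2*dc0 + 2*sc2*sc0*ec2 + 2*sc2*sc1*ec1 + sc2^2*ec0 = 0 := by linear_combination (7/18)*V0 - (13/48)*V1 - (13/48)*Vm1 + (1/12)*V2 + (1/12)*Vm2 - (1/144)*V3 - (1/144)*Vm3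
      have hE5 : (-2)*dc2*dc1*ec2 + (-1)*dc2^2*ec1 + (-4)*sc1*dc2^2 + (-8)*sc2*dc2*dc1 + 2*sc2*sc1*ec2 + sc2^2*ec1 = 0 := by linear_combination (1/48)*V1 - (1/48)*Vm1 - (1/60)*V2 + (1/60)*Vm2 + (1/240)*V3 - (1/240)*Vm3
      have hE6 : (-1)*dc2^2*ec2 + (-4)*sc2*dc2^2 + sc2^2*ec2 = 0 := by linear_combination (-1/36)*V0 + (1/48)*V1 + (1/48)*Vm1 - (1/120)*V2 - (1/120)*Vm2 + (1/720)*V3 + (1/720)*Vm3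
      obtain ⟨hd2z, hs2d, hs1d, hs0d⟩ :=
        key_scalar sc2 sc1 sc0 dc2 dc1 dc0 ec2 ec1 ec0 hsc2 hNne hE0 hE1 hE2 hE3 hE4 hE5 hE6
      have hd1ne : dc1 ≠ 0 := by
        intro hz
        rw [hz] at hs2d
        exact hsc2 (by rw [hs2d]; ring)
      have hdlin : g - f = C dc1 * X + C dc0 := by
        rw [hdrep, hd2z]; simp
      have hseq : f + g = (g-f)^2 + 1 := by
        rw [hsrep, hdlin, hs2d, hs1d, hs0d]
        simp only [map_mul, map_add, map_pow, map_one, map_ofNat]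
        ring
      refine ⟨g - f, ?_, ?_, ?_⟩
      · rw [hdlin]
        exact natDegree_linear hd1ne
      · linear_combination (C (1/2:ℚ)) * hseq - f * hc2
      · linear_combination (C (1/2:ℚ)) * hseq - g * hc2
  · rintro (hcase | ⟨h, hh1, hfeq, hgeq⟩)
    · exact ⟨3, by rw [hcase]; ring⟩
    · refine ⟨h^2 + 5, ?_⟩
      have h2f : 2 * f = h^2 - h + 1 := by
        rw [hfeq, show (2:ℚ[X]) = C 2 from (map_ofNat C 2).symm, ← mul_assoc, ← map_mul]
        norm_num
      have h2g : 2 * g = h^2 + h + 1 := by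
        rw [hgeq, show (2:ℚ[X]) = C 2 from (map_ofNat C 2).symm, ← mul_assoc, ← map_mul]
        norm_num
      have h8 : (8:ℚ[X]) * (f^3 + g^3 + 1) = 8 * (f*g*(h^2+5)) := by
        linear_combination ((1) + (-2)*h + (3)*h^2 + (-2)*h^3 + (1)*h^4 + (-20)*g + (-4)*g*h^2 + (2)*f + (-2)*f*h + (2)*f*h^2 + (4)*f^2) * h2f + ((-9) + (12)*h + (-9)*h^2 + (4)*h^3 + (-1)*h^4 + (2)*g + (2)*g*h + (2)*g*h^2 + (4)*g^2) * h2g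
      exact mul_left_cancel₀ (by norm_num : (8:ℚ[X]) ≠ 0) h8
end

section
/- Let f, g ∈ ℚ[t] be polynomials with deg f = 2 and deg g = 2. Then f·g divides f³ + g³ + 8 in ℚ[t] if and only if either g = −f − 2, or there exists a polynomial h ∈ ℚ[t] of degree 1 such that f = h² − h + 1 and g = h² + h + 1. -/
/-!
Put `s = f + g`. Since `s³ = f³ + g³ + 3fgs`, the condition says `fg ∣ s³ + 8 = (s + 2)((s - 1)² + 3)`.
If `s ≠ -2`, counting degrees gives `deg s = 2`. The factor `(s - 1)² + 3` has no rational root, so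
a quadratic divisor of the product divides one of the two factors; and `f ∣ s + 2` would force
`g + 2 = -f`. Since `f` and `g` are coprime (their gcd divides 8), `fg ∣ (s - 1)² + 3`, so
`(s - 1)² + 3 = c·fg` for a constant `c`. Comparing leading coefficients after completing the square
forces `c = 4`, and then `f, g = h² ∓ h + 1` with `h = (g - f)/2`.
-/

open Polynomial

section CommRing

variable {R : Type*} [CommRing R] {f g : R}

theorem isCoprime_of_dvd_mul_add_unit {a b c u : R} (hu : IsUnit u) (h : a ∣ b * c + u) :
    IsCoprime a b := by
  obtain ⟨k, hk⟩ := h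
  obtain ⟨v, rfl⟩ := hu
  exact ⟨↑v⁻¹ * k, -(↑v⁻¹ * c), by linear_combination (-(↑v⁻¹ : R)) * hk + Units.inv_mul v⟩

theorem mul_dvd_cube_add_cube_add_eight_iff :
    f * g ∣ f ^ 3 + g ^ 3 + 8 ↔ f * g ∣ (f + g + 2) * ((f + g - 1) ^ 2 + 3) := by
  rw [show (f + g + 2) * ((f + g - 1) ^ 2 + 3) = f ^ 3 + g ^ 3 + 8 + f * g * (3 * (f + g)) by ring]
  exact (dvd_add_left (dvd_mul_right _ _)).symm

theorem dvd_cube_add_eight_of_mul_dvd (h : f * g ∣ f ^ 3 + g ^ 3 + 8) : f ∣ g ^ 3 + 8 := by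
  have := (dvd_mul_right f g).trans h
  rwa [add_assoc, dvd_add_right (dvd_pow_self f three_ne_zero)] at this

end CommRing

section Field

variable {K : Type*} [Field K]

theorem exists_eq_C_mul_of_dvd_of_natDegree_le {p q : K[X]} (hpq : p ∣ q)
    (h : q.natDegree ≤ p.natDegree) : ∃ c, q = C c * p := by
  rcases eq_or_ne q 0 with rfl | hq
  · exact ⟨0, by simp⟩
  obtain ⟨u, hu⟩ := associated_of_dvd_of_natDegree_le hpq hq h
  obtain ⟨c, -, hc⟩ := isUnit_iff.mp u.isUnit
  exact ⟨c, by rw [← hu, ← hc, mul_comm]⟩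

theorem dvd_or_dvd_of_dvd_mul_of_forall_not_isRoot {f a b : K[X]} (hf0 : f ≠ 0)
    (hf : f.natDegree ≤ 2) (hb : ∀ x, ¬ b.IsRoot x) (h : f ∣ a * b) : f ∣ a ∨ f ∣ b := by
  obtain ⟨p, q, hpa, hqb, rfl⟩ := exists_dvd_and_dvd_of_dvd_mul h
  obtain ⟨hp0, hq0⟩ := mul_ne_zero_iff.mp hf0
  rw [natDegree_mul hp0 hq0] at hf
  rcases (show q.natDegree = 0 ∨ q.natDegree = 1 ∨ p.natDegree = 0 by omega) with hq | hq | hp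
  · exact Or.inl ((IsUnit.mul_right_dvd
      (isUnit_iff_degree_eq_zero.mpr ((degree_eq_iff_natDegree_eq hq0).mpr hq))).mpr hpa)
  · obtain ⟨x, hx⟩ := exists_root_of_degree_eq_one ((degree_eq_iff_natDegree_eq hq0).mpr hq)
    exact (hb x (hx.dvd hqb)).elim
  · exact Or.inr ((IsUnit.mul_left_dvd
      (isUnit_iff_degree_eq_zero.mpr ((degree_eq_iff_natDegree_eq hp0).mpr hp))).mpr hqb)

theorem eq_zero_and_isSquare_of_sq_sub_C_mul_sq_eq_C [NeZero (2 : K)] {u v : K[X]} {m k : K}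
    (hu : 0 < u.natDegree) (h : u ^ 2 - C m * v ^ 2 = C k) : k = 0 ∧ IsSquare m := by
  have hmv : C m * v ^ 2 = u ^ 2 - C k := by linear_combination -h
  have hdeg : (C m * v ^ 2).natDegree = 2 * u.natDegree := by
    rw [hmv, natDegree_sub_C, natDegree_pow]
  have hm : m ≠ 0 := by rintro rfl; simp at hdeg; omega
  have hv : v ≠ 0 := by rintro rfl; simp at hdeg; omega
  have hvu : v.natDegree = u.natDegree := by
    rw [natDegree_C_mul hm, natDegree_pow] at hdeg; omega
  have hlead : m * v.leadingCoeff ^ 2 = u.leadingCoeff ^ 2 := by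
    have := congrArg (coeff · (2 * u.natDegree)) hmv
    simp only [coeff_C_mul, coeff_sub, coeff_C, coeff_pow_mul_natDegree] at this
    rwa [← hvu, coeff_pow_mul_natDegree, hvu, if_neg (by omega), sub_zero] at this
  set δ := u.leadingCoeff / v.leadingCoeff
  have hδ : δ ^ 2 = m := by
    rw [div_pow, ← hlead, mul_div_cancel_right₀ _ (pow_ne_zero 2 (leadingCoeff_ne_zero.mpr hv))]
  refine ⟨?_, δ, by rw [← hδ, sq]⟩
  by_contra hk
  have hfac : (u - C δ * v) * (u + C δ * v) = C k := by
    rw [← h, ← hδ, C_pow]; ring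
  have hunit : IsUnit ((u - C δ * v) * (u + C δ * v)) := by
    rw [hfac]; exact isUnit_C.mpr (isUnit_iff_ne_zero.mpr hk)
  have h2u : C 2 * u = (u - C δ * v) + (u + C δ * v) := by
    rw [map_ofNat]; ring
  have := congrArg natDegree h2u
  rw [natDegree_C_mul two_ne_zero] at this
  have := natDegree_add_le (u - C δ * v) (u + C δ * v)
  rw [natDegree_eq_zero_of_isUnit (isUnit_of_mul_isUnit_left hunit),
    natDegree_eq_zero_of_isUnit (isUnit_of_mul_isUnit_right hunit)] at this
  omega

section Ordered

variable [LinearOrder K] [IsStrictOrderedRing K] {f g : K[X]}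

theorem not_isRoot_sq_sub_one_add_three (s : K[X]) (x : K) : ¬ ((s - 1) ^ 2 + 3).IsRoot x := by
  simp only [IsRoot, eval_add, eval_pow, eval_sub, eval_one, eval_ofNat]
  positivity

theorem natDegree_sq_sub_one_add_three (s : K[X]) :
    ((s - 1) ^ 2 + 3).natDegree = 2 * s.natDegree := by
  rw [← map_ofNat C 3, natDegree_add_C, natDegree_pow, ← C_1, natDegree_sub_C]

theorem eq_neg_one_of_dvd_cube_add_eight {ν : K} (hg : 0 < g.natDegree)
    (hdvd : g ∣ f ^ 3 + 8) (hν : g + 2 = C ν * f) : ν = -1 := by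
  have hC : g ∣ C (8 * ν ^ 3 + 8) := by
    have : C (8 * ν ^ 3 + 8) = C ν ^ 3 * (f ^ 3 + 8) - g * (g ^ 2 + 6 * g + 12) := by
      simp only [map_add, map_mul, map_pow, map_ofNat]
      linear_combination ((g + 2) ^ 2 + (g + 2) * (C ν * f) + (C ν * f) ^ 2) * hν
    rw [this]
    exact dvd_sub (dvd_mul_of_dvd_right hdvd _) (dvd_mul_right _ _)
  have hν3 : ν ^ 3 = (-1) ^ 3 := by
    by_contra hne
    have := natDegree_le_of_dvd hC (C_ne_zero.mpr (by contrapose! hne; linear_combination hne / 8))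
    rw [natDegree_C] at this
    omega
  exact (Odd.pow_inj (by decide)).mp hν3

theorem isCoprime_of_mul_dvd_cube_add_cube_add_eight (h : f * g ∣ f ^ 3 + g ^ 3 + 8) :
    IsCoprime f g :=
  isCoprime_of_dvd_mul_add_unit (c := g ^ 2) (u := 8)
    (by rw [← map_ofNat C 8]; exact isUnit_C.mpr (by norm_num))
    (by rw [← pow_succ']; exact dvd_cube_add_eight_of_mul_dvd h)

theorem natDegree_add_eq_two_of_mul_dvd (hf : f.natDegree = 2) (hg : g.natDegree = 2)
    (hfg : f * g ∣ f ^ 3 + g ^ 3 + 8) (hs : f + g + 2 ≠ 0) : (f + g).natDegree = 2 := by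
  have hf0 : f ≠ 0 := by rintro rfl; simp at hf
  have hg0 : g ≠ 0 := by rintro rfl; simp at hg
  have hB : (f + g - 1) ^ 2 + 3 ≠ 0 := fun h ↦
    not_isRoot_sq_sub_one_add_three (f + g) 0 (by rw [h]; simp)
  have hle := natDegree_le_of_dvd (mul_dvd_cube_add_cube_add_eight_iff.mp hfg) (mul_ne_zero hs hB)
  rw [natDegree_mul hf0 hg0, natDegree_mul hs hB, natDegree_sq_sub_one_add_three,
    ← map_ofNat C 2, natDegree_add_C] at hle
  have := natDegree_add_le f g
  omega

theorem dvd_sq_sub_one_add_three_of_mul_dvd (hf : f.natDegree = 2) (hg : g.natDegree = 2)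
    (hfg : f * g ∣ f ^ 3 + g ^ 3 + 8) (hs : f + g + 2 ≠ 0) : f ∣ (f + g - 1) ^ 2 + 3 := by
  have hf0 : f ≠ 0 := by rintro rfl; simp at hf
  refine (dvd_or_dvd_of_dvd_mul_of_forall_not_isRoot hf0 hf.le
    (not_isRoot_sq_sub_one_add_three _)
    (dvd_of_mul_right_dvd (mul_dvd_cube_add_cube_add_eight_iff.mp hfg))).resolve_left ?_
  intro hfs
  have hfg2 : f ∣ g + 2 := (dvd_add_right (dvd_refl f)).mp (by rwa [← add_assoc])
  obtain ⟨ν, hν⟩ := exists_eq_C_mul_of_dvd_of_natDegree_le hfg2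
    (by rw [← map_ofNat C 2, natDegree_add_C, hf, hg])
  have hgf : g ∣ f ^ 3 + 8 :=
    dvd_cube_add_eight_of_mul_dvd (by rwa [mul_comm, add_comm (g ^ 3)])
  have hν1 := eq_neg_one_of_dvd_cube_add_eight (by omega) hgf hν
  exact hs (by rw [add_assoc, hν, hν1, map_neg, map_one]; ring)

theorem eq_four_of_sq_sub_one_add_three_eq_C_mul {c : K}
    (hs : 0 < (f + g).natDegree) (hc : (f + g - 1) ^ 2 + 3 = C c * (f * g)) : c = 4 := by
  by_contra hc4
  have hu : 0 < (C (c - 4) * (f + g) + 4).natDegree := by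
    rwa [← map_ofNat C 4, natDegree_add_C, natDegree_C_mul (sub_ne_zero.mpr hc4)]
  -- With `s = f + g`, `4fg = s² - (g - f)²` turns `hc` into `c(g - f)² = (c - 4)s² + 8s - 16`,
  -- i.e. `((c - 4)s + 4)² - c(c - 4)(g - f)² = 16(c - 3)`.
  obtain ⟨hk, hm⟩ := eq_zero_and_isSquare_of_sq_sub_C_mul_sq_eq_C (v := g - f)
    (m := c * (c - 4)) (k := 16 * (c - 3)) hu (by
      simp only [map_mul, map_sub, map_ofNat]
      linear_combination (-4 * (C c - 4)) * hc)
  have hc3 : c = 3 := by linarith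
  rw [hc3] at hm
  exact absurd hm.nonneg (by norm_num)

theorem exists_eq_sq_sub_add_one_of_sq_sub_one_add_three_eq
    (hs : (f + g).natDegree = 2) (hfg : (f + g - 1) ^ 2 + 3 = 4 * (f * g)) :
    ∃ h : K[X], h.natDegree = 1 ∧ f = h ^ 2 - h + 1 ∧ g = h ^ 2 + h + 1 := by
  set h := C 2⁻¹ * (g - f)
  have hgf : g - f = 2 * h := by
    rw [← mul_assoc, ← map_ofNat C 2, ← C_mul, mul_inv_cancel₀ two_ne_zero, C_1, one_mul]
  have hf : f = h ^ 2 - h + 1 :=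
    mul_left_cancel₀ (by norm_num : (4 : K[X]) ≠ 0)
      (by linear_combination -hfg + (g - f + 2 * h - 2) * hgf)
  have hg : g = h ^ 2 + h + 1 := by linear_combination hgf + hf
  refine ⟨h, ?_, hf, hg⟩
  have hsh : f + g = C 2 * h ^ 2 + C 2 := by rw [hf, hg, map_ofNat]; ring
  rw [hsh, natDegree_add_C, natDegree_C_mul two_ne_zero, natDegree_pow] at hs
  omega

end Ordered

end Field

theorem cubic_congruence_eight_deg2_deg2 (f g : ℚ[X])
    (hf : f.natDegree = 2) (hg : g.natDegree = 2) :
    f * g ∣ f ^ 3 + g ^ 3 + 8 ↔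
      g = -f - 2 ∨
        ∃ h : ℚ[X], h.natDegree = 1 ∧
          f = h ^ 2 - h + 1 ∧
          g = h ^ 2 + h + 1 := by
  refine ⟨fun hfg ↦ ?_, ?_⟩
  · by_cases hs : f + g + 2 = 0
    · exact Or.inl (by linear_combination hs)
    have hf0 : f ≠ 0 := by rintro rfl; simp at hf
    have hg0 : g ≠ 0 := by rintro rfl; simp at hg
    have hsdeg := natDegree_add_eq_two_of_mul_dvd hf hg hfg hs
    have hfB := dvd_sq_sub_one_add_three_of_mul_dvd hf hg hfg hs
    have hgB : g ∣ (f + g - 1) ^ 2 + 3 := by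
      rw [add_comm f g] at hs ⊢
      exact dvd_sq_sub_one_add_three_of_mul_dvd hg hf (by rwa [mul_comm, add_comm (g ^ 3)]) hs
    obtain ⟨c, hc⟩ := exists_eq_C_mul_of_dvd_of_natDegree_le
      ((isCoprime_of_mul_dvd_cube_add_cube_add_eight hfg).mul_dvd hfB hgB)
      (by rw [natDegree_sq_sub_one_add_three, natDegree_mul hf0 hg0, hsdeg, hf, hg])
    have hc4 := eq_four_of_sq_sub_one_add_three_eq_C_mul (by omega) hc
    exact Or.inr (exists_eq_sq_sub_add_one_of_sq_sub_one_add_three_eq hsdeg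
      (by rw [hc, hc4, map_ofNat]))
  · rintro (rfl | ⟨h, -, rfl, rfl⟩)
    · exact ⟨6, by ring⟩
    · exact ⟨2 * h ^ 2 + 10, by ring⟩
end

section
/- Let f, g ∈ ℚ[t] be polynomials with deg f = 2 and deg g = 4. Then f·g divides f³ + g³ + 1 in ℚ[t] if and only if either g = −f² + f − 1, or there exists a polynomial h ∈ ℚ[t] of degree 1 such that f = (1/2)(h² − h + 1) and g = (1/4)(h² + h + 1)(h² − h + 3). -/
/-!
Write `f ^ 3 + 1 = g * r`. Then `r` is quadratic and, since `g * r ≡ 1 [mod f]`, also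
`f ∣ r ^ 3 + 1`: each of the quadratics `f`, `r` divides the cube of the other plus one.
Reduce `r = c f + v` with `deg v ≤ 1`; then `f ∣ v ^ 3 + 1` and `r ∣ w ^ 3 + 1`
for `w = -v / c`.
For linear `v` the quadratic `v ^ 2 - v + 1` has no root, hence is irreducible, so a quadratic
divisor of `v ^ 3 + 1 = (v + 1) (v ^ 2 - v + 1)` is a multiple of `v ^ 2 - v + 1` unless
`v = -1`. Comparing coefficients in the basis `1, w, w ^ 2` leaves either `r = -(f + 1)`, whence
`g = -f ^ 2 + f - 1`, or `f = (v ^ 2 - v + 1) / 2` and `r = (v ^ 2 + v + 1) / 2`, whence the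
second family with `h = 1 - v`.
-/

open Polynomial

section CommRing

variable {R : Type*} [CommRing R]

lemma dvd_pow_add_iff_of_dvd_sub {d a b : R} (n : ℕ) (c : R) (h : d ∣ a - b) :
    d ∣ a ^ n + c ↔ d ∣ b ^ n + c :=
  dvd_iff_dvd_of_dvd_sub (by simpa using h.trans (sub_dvd_pow_sub_pow a b n))

lemma dvd_pow_three_add_one_of_mul_eq {f g r : R} (hgr : g * r = f ^ 3 + 1)
    (hf : f ∣ g ^ 3 + 1) : f ∣ r ^ 3 + 1 := by
  have key : r ^ 3 + 1 = r ^ 3 * (g ^ 3 + 1) - f ^ 3 * (f ^ 6 + 3 * f ^ 3 + 3) := by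
    linear_combination (-((g * r) ^ 2 + g * r * (f ^ 3 + 1) + (f ^ 3 + 1) ^ 2)) * hgr
  rw [key]
  exact (dvd_mul_of_dvd_right hf _).sub (dvd_mul_of_dvd_left (dvd_pow_self f three_ne_zero) _)

end CommRing

lemma sq_sub_self_add_one_pos {K : Type*} [Field K] [LinearOrder K] [IsStrictOrderedRing K]
    (x : K) : 0 < x ^ 2 - x + 1 := by
  nlinarith [sq_nonneg (2 * x - 1)]

namespace Polynomial

section Field

variable {K : Type*} [Field K]

lemma exists_eq_C_mul_of_dvd_of_natDegree_le {p q : K[X]} (hpq : p ∣ q) (hq : q ≠ 0)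
    (h : q.natDegree ≤ p.natDegree) : ∃ c, q = C c * p := by
  obtain ⟨u, rfl⟩ := associated_of_dvd_of_natDegree_le hpq hq h
  obtain ⟨c, -, hc⟩ := isUnit_iff.mp u.isUnit
  exact ⟨c, by rw [hc, mul_comm]⟩

lemma exists_eq_C_mul_add_of_natDegree_eq {p q : K[X]} (h : p.natDegree = q.natDegree)
    (hq : q.natDegree ≠ 0) : ∃ c v, p = C c * q + v ∧ v.natDegree < q.natDegree := by
  have hq0 : q ≠ 0 := by rintro rfl; simp at hq
  have hp0 : p ≠ 0 := by rintro rfl; exact hq (by simpa using h.symm)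
  have hc : p.leadingCoeff / q.leadingCoeff ≠ 0 := by simp [hp0, hq0]
  refine ⟨p.leadingCoeff / q.leadingCoeff, p - C (p.leadingCoeff / q.leadingCoeff) * q,
    by ring, ?_⟩
  by_cases hv : p - C (p.leadingCoeff / q.leadingCoeff) * q = 0
  · rw [hv, natDegree_zero]; omega
  · rw [← h]
    refine natDegree_lt_natDegree hv (degree_sub_lt_left ?_ hp0 ?_)
    · rw [degree_C_mul hc, degree_eq_natDegree hp0, degree_eq_natDegree hq0, h]
    · rw [leadingCoeff_mul, leadingCoeff_C, div_mul_cancel₀ _ (leadingCoeff_ne_zero.mpr hq0)]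

lemma coeffs_eq_zero_of_C_mul_sq_add_C_mul_add_C_eq_zero {w : K[X]} (hw : w.natDegree ≠ 0)
    {a b c : K} (h : C a * w ^ 2 + C b * w + C c = 0) : a = 0 ∧ b = 0 ∧ c = 0 := by
  have hp : (C a * X ^ 2 + C b * X + C c).comp w = 0 := by simpa using h
  rcases comp_eq_zero_iff.mp hp with hp | ⟨-, hw'⟩
  · refine ⟨?_, ?_, ?_⟩
    · simpa using congrArg (coeff · 2) hp
    · simpa using congrArg (coeff · 1) hp
    · simpa using congrArg (coeff · 0) hp
  · exact absurd (by rw [hw', natDegree_C]) hw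

end Field

section OrderedField

variable {K : Type*} [Field K] [LinearOrder K] [IsStrictOrderedRing K]

lemma sq_sub_self_add_one_ne_zero (v : K[X]) : v ^ 2 - v + 1 ≠ 0 := fun h =>
  (sq_sub_self_add_one_pos (v.eval 0)).ne' (by simpa using congrArg (eval 0) h)

lemma natDegree_sq_sub_self_add_one (v : K[X]) :
    (v ^ 2 - v + 1).natDegree = 2 * v.natDegree := by
  have : v ^ 2 - v + 1 = (X ^ 2 - X + 1 : K[X]).comp v := by simp
  rw [this, natDegree_comp]
  congr 1
  compute_degree!

lemma irreducible_sq_sub_self_add_one {v : K[X]} (hv : v.natDegree = 1) :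
    Irreducible (v ^ 2 - v + 1) :=
  irreducible_of_degree_le_three_of_not_isRoot
    (by simp [natDegree_sq_sub_self_add_one, hv])
    (fun x hx => (sq_sub_self_add_one_pos (v.eval x)).ne' (by simpa using hx))

lemma eq_neg_one_or_eq_C_mul_of_dvd_pow_three_add_one {f v : K[X]}
    (hf : f.natDegree = 2) (hv : v.natDegree ≤ 1) (hdvd : f ∣ v ^ 3 + 1) :
    v = -1 ∨ v.natDegree = 1 ∧ ∃ k, f = C k * (v ^ 2 - v + 1) := by
  have hf0 : f ≠ 0 := by rintro rfl; simp at hf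
  have hfac : v ^ 3 + 1 = (v + 1) * (v ^ 2 - v + 1) := by ring
  rcases hv.lt_or_eq with hv0 | hv1
  · have hzero : v ^ 3 + 1 = 0 := eq_zero_of_dvd_of_natDegree_lt hdvd <| by
      rw [hf]
      exact (natDegree_add_le _ _).trans_lt (by simp [natDegree_pow, Nat.lt_one_iff.mp hv0])
    rw [hfac] at hzero
    exact .inl (eq_neg_of_add_eq_zero_left
      ((mul_eq_zero.mp hzero).resolve_right (sq_sub_self_add_one_ne_zero v)))
  · rcases dvd_or_isCoprime _ f (irreducible_sq_sub_self_add_one hv1) with hQf | hcop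
    · refine .inr ⟨hv1, exists_eq_C_mul_of_dvd_of_natDegree_le hQf hf0 ?_⟩
      rw [natDegree_sq_sub_self_add_one, hv1, hf]
    · have hdvd' : f ∣ v + 1 := hcop.symm.dvd_of_dvd_mul_right (hfac ▸ hdvd)
      refine .inl (eq_neg_of_add_eq_zero_left (eq_zero_of_dvd_of_natDegree_lt hdvd' ?_))
      rw [hf]
      exact (natDegree_add_le _ _).trans_lt (by rw [natDegree_one]; omega)

lemma eq_one_and_eq_half_of_C_mul_eq {w : K[X]} (hw : w.natDegree ≠ 0) {c k k' : K}
    (hc : c ≠ 0) (hk : k ≠ 0)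
    (h : C k' * (w ^ 2 - w + 1) = C c * (C k * ((C c * w) ^ 2 + C c * w + 1)) - C c * w) :
    c = 1 ∧ k = 1 / 2 := by
  have hcoeff : C (k' - c ^ 3 * k) * w ^ 2 + C (c - k' - c ^ 2 * k) * w + C (k' - c * k) = 0 := by
    simp only [map_sub, map_mul, map_pow]
    linear_combination h
  obtain ⟨e1, e2, e3⟩ := coeffs_eq_zero_of_C_mul_sq_add_C_mul_add_C_eq_zero hw hcoeff
  have h1 : k * (c + 1) = 1 := by
    have : c * (1 - k * (c + 1)) = 0 := by linear_combination e2 + e3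
    linear_combination -(mul_eq_zero.mp this).resolve_left hc
  have hc1 : c = 1 := by
    have hne : c + 1 ≠ 0 := by rintro h; simp [h] at h1
    have : c * k * ((c - 1) * (c + 1)) = 0 := by linear_combination e3 - e1
    simpa [hc, hk, hne, sub_eq_zero] using this
  refine ⟨hc1, ?_⟩
  rw [hc1] at h1
  linarith

theorem eq_neg_add_one_or_of_dvd_pow_three_add_one {f r : K[X]}
    (hf : f.natDegree = 2) (hr : r.natDegree = 2) (hfr : f ∣ r ^ 3 + 1) (hrf : r ∣ f ^ 3 + 1) :
    r = -(f + 1) ∨ ∃ v, v.natDegree = 1 ∧ f = C (1 / 2) * (v ^ 2 - v + 1) ∧ r = f + v := by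
  obtain ⟨c, v, hrv, hv⟩ := exists_eq_C_mul_add_of_natDegree_eq (hr.trans hf.symm) (by omega)
  rw [hf] at hv
  have hc : c ≠ 0 := by
    rintro rfl
    rw [hrv, C_0, zero_mul, zero_add] at hr
    omega
  have hcc : C c * C c⁻¹ = 1 := by rw [← C_mul, mul_inv_cancel₀ hc, C_1]
  obtain ⟨w, hw⟩ : ∃ w, w = -C c⁻¹ * v := ⟨_, rfl⟩
  have hvw : v = -C c * w := by linear_combination (-v) * hcc + C c * hw
  have hwdeg : w.natDegree = v.natDegree := by
    rw [hw, neg_mul, natDegree_neg, natDegree_C_mul (inv_ne_zero hc)]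
  have hfv : f ∣ v ^ 3 + 1 :=
    (dvd_pow_add_iff_of_dvd_sub 3 1 ⟨C c, by rw [hrv]; ring⟩).mp hfr
  have hrw : r ∣ w ^ 3 + 1 :=
    (dvd_pow_add_iff_of_dvd_sub 3 1
      ⟨C c⁻¹, by rw [hw, hrv]; linear_combination (-f) * hcc⟩).mp hrf
  rcases eq_neg_one_or_eq_C_mul_of_dvd_pow_three_add_one hf (by omega) hfv
    with hv1 | ⟨hv1, k, hfk⟩
  · left
    rcases eq_neg_one_or_eq_C_mul_of_dvd_pow_three_add_one hr (by omega) hrw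
      with hw1 | ⟨hw1, -⟩
    · -- `v = w = -1` forces `c⁻¹ = -1`
      have hc1 : C c = -1 := by linear_combination C c * (hw1 - hw + C c⁻¹ * hv1) - hcc
      rw [hrv, hc1, hv1]
      ring
    · rw [hwdeg, hv1] at hw1
      simp at hw1
  · right
    rcases eq_neg_one_or_eq_C_mul_of_dvd_pow_three_add_one hr (by omega) hrw
      with hw1 | ⟨-, k', hrk⟩
    · rw [← hwdeg, hw1] at hv1
      simp at hv1
    have hk : k ≠ 0 := by
      rintro rfl
      rw [C_0, zero_mul] at hfk
      simp [hfk] at hf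
    obtain ⟨hc1, hk2⟩ := eq_one_and_eq_half_of_C_mul_eq (w := w) (k' := k') (by omega) hc hk
      (by rw [← hrk, hrv, hfk, hvw]; ring)
    exact ⟨v, hv1, by rw [hfk, hk2], by rw [hrv, hc1, C_1, one_mul]⟩

end OrderedField

end Polynomial

theorem cubic_congruence_deg2_deg4 (f g : ℚ[X])
    (hf : f.natDegree = 2) (hg : g.natDegree = 4) :
    f * g ∣ f ^ 3 + g ^ 3 + 1 ↔
      g = -f ^ 2 + f - 1 ∨
        ∃ h : ℚ[X], h.natDegree = 1 ∧
          f = C (1/2 : ℚ) * (h ^ 2 - h + 1) ∧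
          g = C (1/4 : ℚ) * ((h ^ 2 + h + 1) * (h ^ 2 - h + 3)) := by
  constructor
  · intro hdvd
    have hfg : f ∣ g ^ 3 + 1 := by
      rw [← dvd_add_right (dvd_pow_self f three_ne_zero), ← add_assoc]
      exact (dvd_mul_right f g).trans hdvd
    obtain ⟨r, hr⟩ : g ∣ f ^ 3 + 1 := by
      rw [← dvd_add_right (dvd_pow_self g three_ne_zero), add_left_comm, ← add_assoc]
      exact (dvd_mul_left g f).trans hdvd
    have h6 : (f ^ 3 + 1).natDegree = 6 := by
      rw [natDegree_add_eq_left_of_natDegree_lt] <;> simp [natDegree_pow, hf]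
    have hr0 : r ≠ 0 := by rintro rfl; simp [hr] at h6
    have hr2 : r.natDegree = 2 := by
      rw [hr, natDegree_mul (by rintro rfl; simp at hg) hr0, hg] at h6
      omega
    rcases eq_neg_add_one_or_of_dvd_pow_three_add_one hf hr2
      (dvd_pow_three_add_one_of_mul_eq hr.symm hfg) (Dvd.intro_left g hr.symm)
      with rfl | ⟨v, hv, hfv, rfl⟩
    · exact .inl (mul_right_cancel₀ (neg_ne_zero.mpr hr0) (by linear_combination hr))
    · refine .inr ⟨1 - v, ?_, by rw [hfv]; ring, mul_right_cancel₀ hr0 ?_⟩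
      · rw [natDegree_sub_eq_right_of_natDegree_lt] <;> simp [hv]
      · rw [← hr, hfv]
        exact Polynomial.funext fun x => by
          simp only [eval_add, eval_sub, eval_mul, eval_pow, eval_C, eval_one, eval_ofNat]; ring
  · rintro (rfl | ⟨h, -, rfl, rfl⟩)
    · exact Dvd.intro (f ^ 3 - 2 * f ^ 2 + 3 * f - 3) (by ring)
    · refine Dvd.intro (C (1 / 8 : ℚ) * (h ^ 6 + h ^ 5 + 6 * h ^ 4 + 9 * h ^ 3 + 18 * h ^ 2
        + 21 * h + 33)) (Polynomial.funext fun x => ?_)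
      simp only [eval_add, eval_sub, eval_mul, eval_pow, eval_C, eval_one, eval_ofNat]
      ring
end

section
/- Let f, g ∈ ℚ[t] be polynomials with deg f = 2 and deg g = 5. Then f·g divides f³ + g³ + 1 in ℚ[t] if and only if there exists a polynomial h ∈ ℚ[t] of degree 1 such that f = −h² + h − 1 and g = h⁵ − 2h⁴ + 4h³ − 3h² + 3h. -/
open Polynomial

/-- Over `ℚ`, the only cube root of `-1` is `-1`. -/
lemma rat_cube_eq_neg_one {x : ℚ} (hx : x ^ 3 = -1) : x = -1 := by
  have h : (x + 1) * (x ^ 2 - x + 1) = 0 := by linear_combination hx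
  rcases mul_eq_zero.mp h with h1 | h2
  · linarith
  · nlinarith [sq_nonneg (2 * x - 1)]

theorem cubic_congruence_deg2_deg5 (f g : ℚ[X])
    (hf : f.natDegree = 2) (hg : g.natDegree = 5) :
    f * g ∣ f ^ 3 + g ^ 3 + 1 ↔
      ∃ h : ℚ[X], h.natDegree = 1 ∧
        f = -h ^ 2 + h - 1 ∧
        g = h ^ 5 - 2 * h ^ 4 + 4 * h ^ 3 - 3 * h ^ 2 + 3 * h := by
  constructor
  · intro hdvd
    have hf0 : f ≠ 0 := fun h0 => by simp [h0] at hf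
    have hg0 : g ≠ 0 := fun h0 => by simp [h0] at hg
    -- f ∣ g³+1 and g ∣ f³+1
    have hfd : f ∣ g ^ 3 + 1 := by
      have h1 : f ∣ f ^ 3 + g ^ 3 + 1 := (dvd_mul_right f g).trans hdvd
      have h2 : f ∣ f ^ 3 := dvd_pow_self f (by norm_num)
      have h3 := dvd_sub h1 h2
      have e : f ^ 3 + g ^ 3 + 1 - f ^ 3 = g ^ 3 + 1 := by ring
      rwa [e] at h3
    have hgd : g ∣ f ^ 3 + 1 := by
      have h1 : g ∣ f ^ 3 + g ^ 3 + 1 := (dvd_mul_left g f).trans hdvd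
      have h2 : g ∣ g ^ 3 := dvd_pow_self g (by norm_num)
      have h3 := dvd_sub h1 h2
      have e : f ^ 3 + g ^ 3 + 1 - g ^ 3 = f ^ 3 + 1 := by ring
      rwa [e] at h3
    obtain ⟨g', hgg'⟩ := hgd
    -- degrees
    have hdf3 : (f ^ 3 + 1 : ℚ[X]).natDegree = 6 := by
      have e : (f ^ 3 + 1 : ℚ[X]) = f ^ 3 + C 1 := by simp
      rw [e, natDegree_add_C, natDegree_pow, hf]
    have hf31 : (f ^ 3 + 1 : ℚ[X]) ≠ 0 := fun h0 => by simp [h0] at hdf3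
    have hg'0 : g' ≠ 0 := by
      rintro rfl; rw [mul_zero] at hgg'; exact hf31 hgg'
    have hdg' : g'.natDegree = 1 := by
      have e := hdf3
      rw [hgg', natDegree_mul hg0 hg'0, hg] at e
      omega
    -- f ∣ g'³+1
    have hfd' : f ∣ g' ^ 3 + 1 := by
      have key : g' ^ 3 + 1 =
          g' ^ 3 * (g ^ 3 + 1) - f ^ 3 * ((g * g') ^ 2 + g * g' + 1) := by
        linear_combination ((g * g') ^ 2 + g * g' + 1) * hgg'
      rw [key]
      exact dvd_sub (Dvd.dvd.mul_left hfd _)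
        (Dvd.dvd.mul_right (dvd_pow_self f (by norm_num)) _)
    obtain ⟨f', hff'⟩ := hfd'
    have hdg3 : (g' ^ 3 + 1 : ℚ[X]).natDegree = 3 := by
      have e : (g' ^ 3 + 1 : ℚ[X]) = g' ^ 3 + C 1 := by simp
      rw [e, natDegree_add_C, natDegree_pow, hdg']
    have hg31 : (g' ^ 3 + 1 : ℚ[X]) ≠ 0 := fun h0 => by simp [h0] at hdg3
    have hf'0 : f' ≠ 0 := by
      rintro rfl; rw [mul_zero] at hff'; exact hg31 hff'
    have hdf' : f'.natDegree = 1 := by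
      have e := hdg3
      rw [hff', natDegree_mul hf0 hf'0, hf] at e
      omega
    -- g' ∣ f'³+1
    have hg'd : g' ∣ f' ^ 3 + 1 := by
      have key : f' ^ 3 + 1 =
          f' ^ 3 * (f ^ 3 + 1) - g' ^ 3 * ((f * f') ^ 2 + f * f' + 1) := by
        linear_combination ((f * f') ^ 2 + f * f' + 1) * hff'
      rw [key]
      refine dvd_sub (Dvd.dvd.mul_left ⟨g, by rw [hgg']; ring⟩ _)
        (Dvd.dvd.mul_right (dvd_pow_self g' (by norm_num)) _)
    -- root of f'
    set c1 := f'.coeff 1 with hc1def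
    set c0 := f'.coeff 0 with hc0def
    have hf'eq : f' = C c1 * X + C c0 := eq_X_add_C_of_natDegree_le_one (by omega)
    have hc1 : c1 ≠ 0 := by
      intro h0
      rw [hf'eq, h0] at hdf'
      simp at hdf'
    set r : ℚ := -c0 / c1 with hrdef
    have hc1r : c1 * r = -c0 := by
      rw [hrdef, mul_div_assoc', mul_comm, mul_div_assoc, div_self hc1, mul_one]
    have hroot : f'.eval r = 0 := by
      rw [hf'eq]
      simp only [eval_add, eval_mul, eval_C, eval_X]
      rw [hc1r]; ring
    -- g' evaluated at r is -1
    have hgr : g'.eval r = -1 := by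
      have hev : (g' ^ 3 + 1 : ℚ[X]).eval r = 0 := by
        rw [hff', eval_mul, hroot, mul_zero]
      simp only [eval_add, eval_pow, eval_one] at hev
      exact rat_cube_eq_neg_one (by linarith)
    -- X - C r divides g' + 1
    have hd1 : (X - C r) ∣ g' + 1 := by
      rw [dvd_iff_isRoot]
      simp [IsRoot, hgr]
    obtain ⟨u, hu⟩ := hd1
    have hg'1deg : (g' + 1).natDegree = 1 := by
      have e : (g' + 1 : ℚ[X]) = g' + C 1 := by simp
      rw [e, natDegree_add_C, hdg']
    have hg'1ne : (g' + 1 : ℚ[X]) ≠ 0 := fun h0 => by simp [h0] at hg'1deg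
    have hXr0 : (X - C r : ℚ[X]) ≠ 0 := X_sub_C_ne_zero r
    have hu0 : u ≠ 0 := by
      rintro rfl; rw [mul_zero] at hu; exact hg'1ne hu
    have hudeg : u.natDegree = 0 := by
      have e := hg'1deg
      rw [hu, natDegree_mul hXr0 hu0, natDegree_X_sub_C] at e
      omega
    obtain ⟨d, hd⟩ : ∃ d : ℚ, u = C d := ⟨u.coeff 0, eq_C_of_natDegree_eq_zero hudeg⟩
    have hd0 : d ≠ 0 := fun h0 => hu0 (by rw [hd, h0, map_zero])
    -- f' = C c1 * (X - C r)
    have hf'X : f' = C c1 * (X - C r) := by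
      rw [hf'eq, mul_sub, ← C_mul, hc1r, map_neg, sub_neg_eq_add]
    -- f' = C e * (g' + 1) with e = c1 / d
    set e : ℚ := c1 / d with hedef
    have hfe : f' = C e * (g' + 1) := by
      have hde : e * d = c1 := by rw [hedef, div_mul_cancel₀ _ hd0]
      rw [hu, hd, hf'X,
        show (C e : ℚ[X]) * ((X - C r) * C d) = C e * C d * (X - C r) by ring,
        ← C_mul, hde]
    -- g' ∣ C (e³ + 1), hence e³ = -1
    have hdvC : g' ∣ (C (e ^ 3 + 1) : ℚ[X]) := by
      have expand : (C (e ^ 3 + 1) : ℚ[X]) =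
          (f' ^ 3 + 1) - g' * (C (e ^ 3) * (g' ^ 2 + 3 * g' + 3)) := by
        rw [map_add, map_one, map_pow, hfe]
        ring
      rw [expand]
      exact dvd_sub hg'd ⟨C (e ^ 3) * (g' ^ 2 + 3 * g' + 3), rfl⟩
    have he3 : e = -1 := by
      have hz : e ^ 3 + 1 = 0 := by
        by_contra hne
        have hun : IsUnit (C (e ^ 3 + 1) : ℚ[X]) := isUnit_C.mpr (Ne.isUnit hne)
        have := natDegree_eq_zero_of_isUnit (isUnit_of_dvd_unit hdvC hun)
        omega
      exact rat_cube_eq_neg_one (by linarith)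
    have hf'val : f' = -(g' + 1) := by
      rw [hfe, he3]; simp
    -- cancel to get f
    have hfval : f = -(g' ^ 2 - g' + 1) := by
      have hcan : (g' + 1) * f = (g' + 1) * (-(g' ^ 2 - g' + 1)) := by
        rw [hf'val] at hff'
        linear_combination hff'
      exact mul_left_cancel₀ hg'1ne hcan
    -- conclude with h = 1 - g'
    refine ⟨1 - g', ?_, ?_, ?_⟩
    · have e1 : (1 - g' : ℚ[X]) = -(g' - C 1) := by simp
      rw [e1, natDegree_neg, natDegree_sub_C, hdg']
    · rw [hfval]; ring
    · apply mul_left_cancel₀ hg'0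
      linear_combination (-1 : ℚ[X]) * hgg' +
        (f ^ 2 - f * (g' ^ 2 - g' + 1) + (g' ^ 2 - g' + 1) ^ 2) * hfval
  · rintro ⟨h, hh1, rfl, rfl⟩
    exact ⟨-h ^ 8 + 3 * h ^ 7 - 8 * h ^ 6 + 11 * h ^ 5 - 15 * h ^ 4 + 10 * h ^ 3
      - 8 * h ^ 2 - 1, by ring⟩
end

section
/- Let f, g ∈ ℚ[t] be polynomials with deg f = 2 and deg g = 6. If f·g divides f³ + g³ + 1 in ℚ[t], then g = −f³ − 1. -/
open Polynomial

theorem cubic_congruence_deg2_deg6 (f g : ℚ[X])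
    (hf : f.natDegree = 2) (hg : g.natDegree = 6)
    (hdvd : f * g ∣ f ^ 3 + g ^ 3 + 1) :
    g = -f ^ 3 - 1 := by
  have hf0 : f ≠ 0 := fun h => by simp [h] at hf
  have hg0 : g ≠ 0 := fun h => by simp [h] at hg
  have hgF : g ∣ f ^ 3 + g ^ 3 + 1 := (dvd_mul_left g f).trans hdvd
  have hfF : f ∣ f ^ 3 + g ^ 3 + 1 := (dvd_mul_right f g).trans hdvd
  have hg1 : g ∣ f ^ 3 + 1 := by
    have h1 : g ∣ (f ^ 3 + g ^ 3 + 1) - g ^ 3 :=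
      dvd_sub hgF (dvd_pow_self g (by norm_num))
    have : (f ^ 3 + g ^ 3 + 1) - g ^ 3 = f ^ 3 + 1 := by ring
    rwa [this] at h1
  have hf1 : f ∣ g ^ 3 + 1 := by
    have h1 : f ∣ (f ^ 3 + g ^ 3 + 1) - f ^ 3 :=
      dvd_sub hfF (dvd_pow_self f (by norm_num))
    have : (f ^ 3 + g ^ 3 + 1) - f ^ 3 = g ^ 3 + 1 := by ring
    rwa [this] at h1
  -- degree of f^3 + 1 is 6
  have hdf3 : (f ^ 3 + 1 : ℚ[X]).natDegree = 6 := by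
    have h3 : (f ^ 3 : ℚ[X]).natDegree = 6 := by
      rw [natDegree_pow, hf]
    rw [show (1:ℚ[X]) = C 1 from rfl, natDegree_add_C, h3]
  have hF0 : (f ^ 3 + 1 : ℚ[X]) ≠ 0 := by
    intro h; rw [h] at hdf3; simp at hdf3
  obtain ⟨q, hq⟩ := hg1
  have hq0 : q ≠ 0 := by
    intro h; rw [h, mul_zero] at hq; exact hF0 hq
  have hqd : q.natDegree = 0 := by
    have := hdf3
    rw [hq, natDegree_mul hg0 hq0, hg] at this
    omega
  obtain ⟨a, ha⟩ := natDegree_eq_zero.mp hqd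
  have ha0 : a ≠ 0 := by
    intro h; rw [h, map_zero] at ha; exact hq0 ha.symm
  rw [← ha] at hq
  -- f ∣ g * C a - 1
  have hfm : f ∣ g * C a - 1 := by
    have : g * C a - 1 = f * f ^ 2 := by
      rw [← hq]; ring
    rw [this]; exact dvd_mul_right f (f ^ 2)
  -- f ∣ (g*C a)^3 - 1
  have hfm3 : f ∣ (g * C a) ^ 3 - 1 := by
    have hd : g * C a - 1 ∣ (g * C a) ^ 3 - 1 := by
      have : (g * C a) ^ 3 - 1 =
          (g * C a - 1) * ((g * C a) ^ 2 + g * C a + 1) := by ring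
      rw [this]; exact dvd_mul_right _ _
    exact hfm.trans hd
  -- f ∣ C (a^3 + 1)
  have hconst : f ∣ C (a ^ 3 + 1) := by
    have h1 : f ∣ (g ^ 3 + 1) * C (a ^ 3) := hf1.mul_right _
    have h2 : f ∣ (g ^ 3 + 1) * C (a ^ 3) - ((g * C a) ^ 3 - 1) :=
      dvd_sub h1 hfm3
    have : (g ^ 3 + 1) * C (a ^ 3) - ((g * C a) ^ 3 - 1) = C (a ^ 3 + 1) := by
      rw [map_add, map_pow, map_one]; ring
    rwa [this] at h2
  have ha3 : a ^ 3 + 1 = 0 := by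
    by_contra h
    have hC0 : (C (a ^ 3 + 1) : ℚ[X]) ≠ 0 := fun hh => h (C_eq_zero.mp hh)
    have := natDegree_le_of_dvd hconst hC0
    rw [hf, natDegree_C] at this
    omega
  have haval : a = -1 := by
    have h1 : (a + 1) * (a ^ 2 - a + 1) = 0 := by linear_combination ha3
    have h2 : a ^ 2 - a + 1 ≠ 0 := by nlinarith [sq_nonneg (2*a - 1)]
    have := mul_eq_zero.mp h1
    rcases this with h | h
    · linarith
    · exact absurd h h2
  rw [haval] at hq
  have : f ^ 3 + 1 = -g := by
    rw [hq]; simp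
  linear_combination this
end

section
/- Let g ∈ ℚ[t] be a polynomial with deg g ≥ 1 and let t denote the identity polynomial X. Then t·g divides t³ + g³ + 1 in ℚ[t] if and only if g = −t − 1, or g = −t² + t − 1, or g = −t³ − 1. -/
open Polynomial

theorem cubic_congruence_deg1 (g : ℚ[X]) (hg : 1 ≤ g.natDegree) :
    X * g ∣ X ^ 3 + g ^ 3 + 1 ↔
      g = -X - 1 ∨ g = -X ^ 2 + X - 1 ∨ g = -X ^ 3 - 1 := by
  constructor
  · intro hdvd
    set p : ℚ[X] := X + 1 with hp_def
    set q : ℚ[X] := X ^ 2 - X + 1 with hq_def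
    have hp0 : p ≠ 0 := by
      intro h
      have := congrArg (eval 0) h
      simp [hp_def] at this
    have hq0 : q ≠ 0 := by
      intro h
      have := congrArg (eval 0) h
      simp [hq_def] at this
    have hp_irr : Irreducible p := by
      have := irreducible_X_sub_C (-1 : ℚ)
      simpa [hp_def, sub_neg_eq_add] using this
    have hqmonic : q.Monic := by unfold q; monicity!
    have hqdeg : q.natDegree = 2 := by unfold q; compute_degree!
    have hq_irr : Irreducible q := by
      rw [hqmonic.irreducible_iff_roots_eq_zero_of_degree_le_three (by omega) (by omega)]
      rw [Multiset.eq_zero_iff_forall_notMem]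
      intro a ha
      rw [mem_roots hqmonic.ne_zero] at ha
      simp [hq_def, IsRoot] at ha
      nlinarith [sq_nonneg (a - 1), sq_nonneg a]
    have hXf : X ∣ X ^ 3 + g ^ 3 + 1 := (dvd_mul_right X g).trans hdvd
    have hgf : g ∣ X ^ 3 + g ^ 3 + 1 := (dvd_mul_left g X).trans hdvd
    have hg31 : g ∣ p * q := by
      have h1 : g ∣ (X ^ 3 + g ^ 3 + 1) - g ^ 3 :=
        dvd_sub hgf (dvd_pow_self g three_ne_zero)
      have h2 : p * q = (X ^ 3 + g ^ 3 + 1) - g ^ 3 := by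
        unfold p q; ring
      rwa [h2]
    have heval : g.eval 0 = -1 := by
      obtain ⟨c, hc⟩ := hXf
      have := congrArg (eval 0) hc
      simp at this
      set a := g.eval 0
      have h3 : (a + 1) * (a ^ 2 - a + 1) = 0 := by linear_combination this
      have h4 : a ^ 2 - a + 1 ≠ 0 := by nlinarith [sq_nonneg (a - 1), sq_nonneg a]
      have h5 : a + 1 = 0 := by
        rcases mul_eq_zero.mp h3 with h | h
        · exact h
        · exact absurd h h4
      linarith
    have hgunit : ¬ IsUnit g := by
      intro h
      have := Polynomial.natDegree_eq_zero_of_isUnit h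
      omega
    by_cases hpg : p ∣ g
    · by_cases hqg : q ∣ g
      · -- g associated to p * q
        have hcop : IsCoprime p q := by
          rw [hp_irr.coprime_iff_not_dvd]
          intro h
          have : IsRoot q (-1) := by
            rw [← dvd_iff_isRoot]
            simpa [hp_def, sub_neg_eq_add] using h
          simp [IsRoot, hq_def] at this
          norm_num at this
        have hpq_g : p * q ∣ g := hcop.mul_dvd hpg hqg
        obtain ⟨u, hu⟩ := associated_of_dvd_dvd hpq_g hg31
        obtain ⟨c, hc, hcu⟩ := Polynomial.isUnit_iff.mp u.isUnit
        have hgeq : g = p * q * C c := by rw [hcu, hu]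
        have hceval : c = -1 := by
          have := heval
          rw [hgeq] at this
          simp [hp_def, hq_def] at this
          linarith
        right; right
        rw [hgeq, hceval, hp_def, hq_def]
        simp only [map_neg, map_one]
        ring
      · -- g = c * p
        obtain ⟨h, hh⟩ := hpg
        have hdq : h ∣ q := by
          have : p * h ∣ p * q := hh ▸ hg31
          exact (mul_dvd_mul_iff_left hp0).mp this
        obtain ⟨k, hk⟩ := hdq
        rcases hq_irr.isUnit_or_isUnit hk with hu | hu
        · obtain ⟨c, hc, hcu⟩ := Polynomial.isUnit_iff.mp hu
          have hgeq : g = p * C c := by rw [hcu, hh]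
          have hceval : c = -1 := by
            have := heval
            rw [hgeq] at this
            simp [hp_def] at this
            linarith
          left
          rw [hgeq, hceval, hp_def]
          simp only [map_neg, map_one]
          ring
        · exfalso
          obtain ⟨ku, hku⟩ := hu
          have hqh : q ∣ h := ⟨(↑ku⁻¹ : ℚ[X]), by
            rw [hk, ← hku, mul_assoc]
            simp⟩
          exact hqg (hqh.trans ⟨p, by rw [hh, mul_comm]⟩)
    · by_cases hqg : q ∣ g
      · -- g = c * q
        obtain ⟨h, hh⟩ := hqg
        have hdp : h ∣ p := by
          have : q * h ∣ q * p := by rw [mul_comm q p]; exact hh ▸ hg31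
          exact (mul_dvd_mul_iff_left hq0).mp this
        obtain ⟨k, hk⟩ := hdp
        rcases hp_irr.isUnit_or_isUnit hk with hu | hu
        · obtain ⟨c, hc, hcu⟩ := Polynomial.isUnit_iff.mp hu
          have hgeq : g = q * C c := by rw [hcu, hh]
          have hceval : c = -1 := by
            have := heval
            rw [hgeq] at this
            simp [hq_def] at this
            linarith
          right; left
          rw [hgeq, hceval, hq_def]
          simp only [map_neg, map_one]
          ring
        · exfalso
          obtain ⟨ku, hku⟩ := hu
          have hph : p ∣ h := ⟨(↑ku⁻¹ : ℚ[X]), by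
            rw [hk, ← hku, mul_assoc]
            simp⟩
          exact hpg (hph.trans ⟨q, by rw [hh, mul_comm]⟩)
      · -- impossible
        exfalso
        obtain ⟨m, hm⟩ := hg31
        have hp_prime : Prime p := hp_irr.prime
        have hpm : p ∣ g * m := hm ▸ dvd_mul_right p q
        rcases hp_prime.2.2 g m hpm with h | h
        · exact hpg h
        · obtain ⟨n, hn⟩ := h
          have hqgn : q = g * n := by
            have : p * q = p * (g * n) := by rw [hm, hn]; ring
            exact mul_left_cancel₀ hp0 this
          rcases hq_irr.isUnit_or_isUnit hqgn with hu | hu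
          · exact hgunit hu
          · obtain ⟨nu, hnu⟩ := hu
            have : q ∣ g := ⟨(↑nu⁻¹ : ℚ[X]), by rw [hqgn, ← hnu, mul_assoc]; simp⟩
            exact hqg this
  · rintro (rfl | rfl | rfl)
    · exact ⟨3, by ring⟩
    · exact ⟨X ^ 3 - 2 * X ^ 2 + 3 * X - 3, by ring⟩
    · exact ⟨X ^ 5 + 2 * X ^ 2, by ring⟩
end

section
/- Let f, g ∈ ℚ[t] be nonzero polynomials such that f·g divides f³ + g³ + 1 in ℚ[t]. Then f divides g³ + 1 in ℚ[t], and the polynomial g′ := (g³ + 1)/f satisfies that g·g′ divides g³ + g′³ + 1 in ℚ[t]; that is, (g, g′) is again a solution of the cubic congruence. -/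
open Polynomial

theorem cubic_congruence_orbit (f g : ℚ[X]) (hf : f ≠ 0) (hg : g ≠ 0)
    (hdvd : f * g ∣ f ^ 3 + g ^ 3 + 1) :
    f ∣ g ^ 3 + 1 ∧
      ∀ g' : ℚ[X], g ^ 3 + 1 = f * g' →
        g * g' ∣ g ^ 3 + g' ^ 3 + 1 := by
  have hfd : f ∣ g ^ 3 + 1 := by
    have h1 : f ∣ f ^ 3 + (g ^ 3 + 1) := by
      have := dvd_trans (dvd_mul_right f g) hdvd
      have e : f ^ 3 + g ^ 3 + 1 = f ^ 3 + (g ^ 3 + 1) := by ring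
      rwa [e] at this
    exact (dvd_add_right (dvd_pow_self f (by norm_num))).mp h1
  refine ⟨hfd, ?_⟩
  intro g' hg'
  have hgd : g ∣ f ^ 3 + 1 := by
    have h1 : g ∣ g ^ 3 + (f ^ 3 + 1) := by
      have := dvd_trans (dvd_mul_left g f) hdvd
      have e : f ^ 3 + g ^ 3 + 1 = g ^ 3 + (f ^ 3 + 1) := by ring
      rwa [e] at this
    exact (dvd_add_right (dvd_pow_self g (by norm_num))).mp h1
  -- g and f are coprime
  have hcgf : IsCoprime g f := by
    rw [← EuclideanDomain.gcd_isUnit_iff]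
    apply isUnit_of_dvd_one
    have d1 : EuclideanDomain.gcd g f ∣ g ^ 3 + 1 :=
      (EuclideanDomain.gcd_dvd_right g f).trans hfd
    have d2 : EuclideanDomain.gcd g f ∣ g ^ 3 :=
      (EuclideanDomain.gcd_dvd_left g f).trans (dvd_pow_self g (by norm_num))
    have := dvd_sub d1 d2
    simpa using this
  -- g and g' are coprime
  have hcgg' : IsCoprime g g' := by
    rw [← EuclideanDomain.gcd_isUnit_iff]
    apply isUnit_of_dvd_one
    have d1 : EuclideanDomain.gcd g g' ∣ g ^ 3 + 1 := by
      rw [hg']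
      exact (EuclideanDomain.gcd_dvd_right g g').trans (dvd_mul_left g' f)
    have d2 : EuclideanDomain.gcd g g' ∣ g ^ 3 :=
      (EuclideanDomain.gcd_dvd_left g g').trans (dvd_pow_self g (by norm_num))
    have := dvd_sub d1 d2
    simpa using this
  -- g ∣ g'^3 + 1
  have key : f ^ 3 * (g' ^ 3 + 1) = (f ^ 3 + 1) + g ^ 3 * (g ^ 6 + 3 * g ^ 3 + 3) := by
    have : (f * g') ^ 3 = (g ^ 3 + 1) ^ 3 := by rw [← hg']
    linear_combination this
  have hgdvd : g ∣ g' ^ 3 + 1 := by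
    have h1 : g ∣ f ^ 3 * (g' ^ 3 + 1) := by
      rw [key]
      exact dvd_add hgd (Dvd.dvd.mul_right (dvd_pow_self g (by norm_num)) _)
    exact (hcgf.pow_right (n := 3)).dvd_of_dvd_mul_left h1
  have hga : g ∣ g ^ 3 + g' ^ 3 + 1 := by
    have e : g ^ 3 + g' ^ 3 + 1 = g ^ 3 + (g' ^ 3 + 1) := by ring
    rw [e]
    exact dvd_add (dvd_pow_self g (by norm_num)) hgdvd
  have hg'a : g' ∣ g ^ 3 + g' ^ 3 + 1 := by
    have e : g ^ 3 + g' ^ 3 + 1 = (g ^ 3 + 1) + g' ^ 3 := by ring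
    rw [e, hg']
    exact dvd_add (dvd_mul_left g' f) (dvd_pow_self g' (by norm_num))
  exact hcgg'.mul_dvd hga hg'a
end

section
/- Let g ∈ ℚ[t] be a polynomial with deg g ≥ 1 and let t denote the identity polynomial X. Then t·g divides t⁴ − 4g² + 4 in ℚ[t] if and only if g = (1/2)(t² + 2t + 2), or g = −(1/2)(t² + 2t + 2), or g = (1/2)(t² − 2t + 2), or g = −(1/2)(t² − 2t + 2), or g = (1/4)(t⁴ + 4), or g = −(1/4)(t⁴ + 4). -/
/-!
Reducing modulo `X` shows `g(0)² = 1`, so `g` is coprime to `X` and the divisibility splits into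
`g(0)² = 1` and `g ∣ X⁴ + 4`. By Sophie Germain's identity `X⁴ + 4 = (X² + 2X + 2)(X² - 2X + 2)`,
a product of two coprime irreducible quadratics, a nonconstant divisor of `X⁴ + 4` is a scalar
multiple of one of the two factors or of their product, and `g(0) = ±1` pins down the scalar.
-/

open Polynomial

theorem dvd_mul_iff_of_irreducible {R : Type*} [CommRing R] [IsDomain R] [IsBezout R]
    {p q a : R} (hp : Irreducible p) (hq : Irreducible q) (hpq : IsCoprime p q) :
    a ∣ p * q ↔ IsUnit a ∨ Associated a p ∨ Associated a q ∨ Associated a (p * q) := by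
  refine ⟨fun h ↦ ?_, ?_⟩
  · rcases hp.isCoprime_or_dvd a with hpa | hpa <;> rcases hq.isCoprime_or_dvd a with hqa | hqa
    · exact .inl (((hpa.mul_left hqa).symm).isUnit_of_dvd h)
    · exact .inr (.inr (.inl (associated_of_dvd_dvd (hpa.symm.dvd_of_dvd_mul_left h) hqa)))
    · exact .inr (.inl (associated_of_dvd_dvd (hqa.symm.dvd_of_dvd_mul_right h) hpa))
    · exact .inr (.inr (.inr (associated_of_dvd_dvd h (hpq.mul_dvd hpa hqa))))
  · rintro (ha | ha | ha | ha)
    · exact ha.dvd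
    · exact ha.dvd.trans (dvd_mul_right p q)
    · exact ha.dvd.trans (dvd_mul_left q p)
    · exact ha.dvd

namespace Polynomial

theorem isCoprime_X_of_isUnit_coeff_zero {R : Type*} [CommRing R] {g : R[X]}
    (hg : IsUnit (g.coeff 0)) : IsCoprime X g := by
  obtain ⟨q, hq⟩ := X_dvd_sub_C (p := g)
  obtain ⟨u, hu⟩ := hg.exists_left_inv
  have hCu : C u * C (g.coeff 0) = 1 := by rw [← C_mul, hu, C_1]
  exact ⟨-(C u * q), C u, by linear_combination C u * hq + hCu⟩

theorem X_mul_dvd_sub_C_mul_sq_iff {K : Type*} [Field K] {f g : K[X]} {c : K} (hc : c ≠ 0)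
    (hf : f.eval 0 = c) : X * g ∣ f - C c * g ^ 2 ↔ g ∣ f ∧ g.eval 0 ^ 2 = 1 := by
  have hX : X ∣ f - C c * g ^ 2 ↔ g.eval 0 ^ 2 = 1 := by
    rw [X_dvd_iff, coeff_zero_eq_eval_zero, eval_sub, eval_mul, eval_C, eval_pow, hf,
      sub_eq_zero, eq_comm, mul_eq_left₀ hc]
  have hg : g ∣ f - C c * g ^ 2 ↔ g ∣ f :=
    dvd_sub_left (dvd_mul_of_dvd_right (dvd_pow_self g two_ne_zero) _)
  refine ⟨fun h ↦ ⟨hg.1 (dvd_of_mul_left_dvd h), hX.1 (dvd_of_mul_right_dvd h)⟩, ?_⟩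
  rintro ⟨hgf, hg0⟩
  have hunit : IsUnit (g.coeff 0) := by
    rw [coeff_zero_eq_eval_zero]
    exact IsUnit.of_pow_eq_one hg0 two_ne_zero
  exact (isCoprime_X_of_isUnit_coeff_zero hunit).mul_dvd (hX.2 hg0) (hg.2 hgf)

theorem irreducible_X_sq_add_C_mul_X_add_C {K : Type*} [Field K] [LinearOrder K]
    [IsStrictOrderedRing K] {b c : K} (h : b ^ 2 < 4 * c) :
    Irreducible (X ^ 2 + C b * X + C c) := by
  refine irreducible_of_degree_le_three_of_not_isRoot ?_ fun x hx ↦ ?_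
  · have : (X ^ 2 + C b * X + C c).natDegree = 2 := by compute_degree!
    simp [this]
  · simp only [IsRoot, eval_add, eval_mul, eval_pow, eval_C, eval_X] at hx
    nlinarith [sq_nonneg (2 * x + b)]

theorem associated_and_eval_sq_eq_one_iff {K : Type*} [Field K] {g p : K[X]} {a : K}
    (hp : p.eval a ≠ 0) :
    Associated g p ∧ g.eval a ^ 2 = 1 ↔
      g = C (p.eval a)⁻¹ * p ∨ g = -(C (p.eval a)⁻¹ * p) := by
  constructor
  · rintro ⟨⟨u, hu⟩, hg⟩
    obtain ⟨c, hc, hCc⟩ := Polynomial.isUnit_iff.mp u.isUnit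
    have hg' : g = C c⁻¹ * p := by
      rw [← hu, ← hCc, mul_comm g, ← mul_assoc, ← C_mul, inv_mul_cancel₀ hc.ne_zero, C_1, one_mul]
    rw [hg', eval_mul, eval_C, sq_eq_one_iff] at hg
    rcases hg with h | h <;> rw [inv_mul_eq_iff_eq_mul₀ hc.ne_zero] at h
    · exact .inl (by rw [hg', h, mul_one])
    · exact .inr (by rw [hg', h, mul_neg_one, inv_neg, C_neg, neg_mul, neg_neg])
  · have hp' : IsUnit (p.eval a)⁻¹ := (inv_ne_zero hp).isUnit
    rintro (rfl | rfl)
    · exact ⟨associated_unit_mul_left p _ (isUnit_C.mpr hp'), by simp [hp]⟩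
    · exact ⟨(associated_unit_mul_left p _ (isUnit_C.mpr hp')).neg_left, by simp [hp]⟩

end Polynomial

theorem quartic_congruence_deg1 (g : ℚ[X]) (hg : 1 ≤ g.natDegree) :
    X * g ∣ X ^ 4 - 4 * g ^ 2 + 4 ↔
      g = C (1/2 : ℚ) * (X ^ 2 + 2 * X + 2) ∨
      g = -(C (1/2 : ℚ) * (X ^ 2 + 2 * X + 2)) ∨
      g = C (1/2 : ℚ) * (X ^ 2 - 2 * X + 2) ∨
      g = -(C (1/2 : ℚ) * (X ^ 2 - 2 * X + 2)) ∨
      g = C (1/4 : ℚ) * (X ^ 4 + 4) ∨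
      g = -(C (1/4 : ℚ) * (X ^ 4 + 4)) := by
  have hA : Irreducible (X ^ 2 + 2 * X + 2 : ℚ[X]) := by
    simpa only [map_ofNat] using
      irreducible_X_sq_add_C_mul_X_add_C (b := (2 : ℚ)) (c := 2) (by norm_num)
  have hB : Irreducible (X ^ 2 - 2 * X + 2 : ℚ[X]) := by
    simpa only [map_ofNat, C_neg, neg_mul, ← sub_eq_add_neg] using
      irreducible_X_sq_add_C_mul_X_add_C (b := (-2 : ℚ)) (c := 2) (by norm_num)
  have hAB : IsCoprime (X ^ 2 + 2 * X + 2 : ℚ[X]) (X ^ 2 - 2 * X + 2) := by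
    have h8 : C (8⁻¹ : ℚ) * 8 = 1 := by rw [← C_ofNat, ← C_mul]; norm_num
    exact ⟨C 8⁻¹ * (2 - X), C 8⁻¹ * (2 + X), by linear_combination h8⟩
  have hunit : ¬ IsUnit g := fun h ↦ by have := natDegree_eq_zero_of_isUnit h; omega
  have hfac : (X ^ 4 + 4 : ℚ[X]) = (X ^ 2 + 2 * X + 2) * (X ^ 2 - 2 * X + 2) := by ring
  rw [show X ^ 4 - 4 * g ^ 2 + 4 = X ^ 4 + 4 - C 4 * g ^ 2 by rw [← C_ofNat]; ring,
    X_mul_dvd_sub_C_mul_sq_iff (by norm_num) (by simp), hfac, dvd_mul_iff_of_irreducible hA hB hAB,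
    or_iff_right hunit, or_and_right, or_and_right, associated_and_eval_sq_eq_one_iff,
    associated_and_eval_sq_eq_one_iff, associated_and_eval_sq_eq_one_iff, ← hfac]
  all_goals norm_num [or_assoc]
end

section
/- There are no polynomials f, g ∈ ℚ[t] with deg f = 2 and deg g = 2 such that f·g divides f⁴ − 4g² + 4 in ℚ[t]. -/
open Polynomial

private lemma aux_deg2 (M : ℚ[X]) (h : M.natDegree ≤ 2) :
    M = C (M.coeff 2) * X ^ 2 + C (M.coeff 1) * X + C (M.coeff 0) := by
  ext n
  rcases n with _ | _ | _ | n
  · simp [coeff_C]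
  · simp [coeff_C]
  · simp [coeff_C, coeff_X_pow]
  · have h1 : M.coeff (n + 3) = 0 :=
      coeff_eq_zero_of_natDegree_lt (by omega)
    simp [coeff_C, coeff_X_pow, h1]

theorem quartic_congruence_no_sol_deg2_deg2 :
    ¬ ∃ f g : ℚ[X], f.natDegree = 2 ∧ g.natDegree = 2 ∧
        f * g ∣ f ^ 4 - 4 * g ^ 2 + 4 := by
  rintro ⟨f, g, hf2, hg2, hdvd⟩
  have hf0 : f ≠ 0 := fun h => by simp [h] at hf2
  have hg0 : g ≠ 0 := fun h => by simp [h] at hg2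
  set a := f.leadingCoeff with ha
  set b := g.leadingCoeff with hb
  have ha0 : a ≠ 0 := leadingCoeff_ne_zero.mpr hf0
  have hb0 : b ≠ 0 := leadingCoeff_ne_zero.mpr hg0
  set r : ℚ[X] := C b * f - C a * g with hr
  -- r has degree ≤ 1
  have hfc2 : f.coeff 2 = a := by rw [ha, ← hf2]; rfl
  have hgc2 : g.coeff 2 = b := by rw [hb, ← hg2]; rfl
  have hr1 : r.natDegree ≤ 1 := by
    rw [natDegree_le_iff_coeff_eq_zero]
    intro N hN
    rcases eq_or_lt_of_le (show 2 ≤ N by omega) with h2 | h2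
    · simp [hr, ← h2, hfc2, hgc2, mul_comm]
    · have hfN : f.coeff N = 0 := coeff_eq_zero_of_natDegree_lt (by omega)
      have hgN : g.coeff N = 0 := coeff_eq_zero_of_natDegree_lt (by omega)
      simp [hr, hfN, hgN]
  -- g divides r^4 + 4 b^4
  have hgdN : g ∣ f ^ 4 - 4 * g ^ 2 + 4 := (dvd_mul_left g f).trans hdvd
  have hgf4 : g ∣ f ^ 4 + 4 := by
    have h : f ^ 4 + 4 = (f ^ 4 - 4 * g ^ 2 + 4) + (4 * g) * g := by ring
    rw [h]; exact dvd_add hgdN (dvd_mul_left g (4 * g))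
  have hgr : g ∣ r ^ 4 + C (4 * b ^ 4) := by
    have h1 : g ∣ C (b ^ 4) * (f ^ 4 + 4) := Dvd.dvd.mul_left hgf4 _
    have h2 : C (b ^ 4) * (f ^ 4 + 4) - (r ^ 4 + C (4 * b ^ 4)) =
        (((C b * f) ^ 3 + (C b * f) ^ 2 * r + (C b * f) * r ^ 2 + r ^ 3) * C a) * g := by
      simp only [hr, map_mul, map_pow, map_ofNat]
      ring
    have h3 : g ∣ C (b ^ 4) * (f ^ 4 + 4) - (r ^ 4 + C (4 * b ^ 4)) := by
      rw [h2]; exact Dvd.intro_left _ rfl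
    have h4 : r ^ 4 + C (4 * b ^ 4) =
        C (b ^ 4) * (f ^ 4 + 4) - (C (b ^ 4) * (f ^ 4 + 4) - (r ^ 4 + C (4 * b ^ 4))) := by ring
    rw [h4]; exact dvd_sub h1 h3
  -- f divides r^2 - a^2
  have hfdN : f ∣ f ^ 4 - 4 * g ^ 2 + 4 := (dvd_mul_right f g).trans hdvd
  have hfg2 : f ∣ g ^ 2 - 1 := by
    have hsub : f ∣ 4 * g ^ 2 - 4 := by
      have h : 4 * g ^ 2 - 4 = f ^ 3 * f - (f ^ 4 - 4 * g ^ 2 + 4) := by ring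
      rw [h]
      exact dvd_sub (Dvd.intro_left _ rfl) hfdN
    have h : g ^ 2 - 1 = C (4⁻¹ : ℚ) * (4 * g ^ 2 - 4) := by
      have h4 : (4 : ℚ[X]) = C 4 := (map_ofNat C 4).symm
      rw [h4, mul_sub, ← mul_assoc, ← C_mul,
        show (4⁻¹ * 4 : ℚ) = 1 by norm_num, C_1]
      ring
    rw [h]
    exact Dvd.dvd.mul_left hsub _
  have hfr : f ∣ r ^ 2 - C (a ^ 2) := by
    have h1 : f ∣ C (a ^ 2) * (g ^ 2 - 1) := Dvd.dvd.mul_left hfg2 _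
    have h2 : (r ^ 2 - C (a ^ 2)) - C (a ^ 2) * (g ^ 2 - 1) =
        (((C b * f) - 2 * C a * g) * C b) * f := by
      simp only [hr, map_pow]
      ring
    have h3 : f ∣ (r ^ 2 - C (a ^ 2)) - C (a ^ 2) * (g ^ 2 - 1) := by
      rw [h2]; exact Dvd.intro_left _ rfl
    have h4 : r ^ 2 - C (a ^ 2) =
        ((r ^ 2 - C (a ^ 2)) - C (a ^ 2) * (g ^ 2 - 1)) + C (a ^ 2) * (g ^ 2 - 1) := by ring
    rw [h4]; exact dvd_add h3 h1
  -- r is not constant, so it has degree exactly 1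
  have hrd1 : r.natDegree = 1 := by
    rcases Nat.lt_or_ge r.natDegree 1 with h | h
    · exfalso
      have hrc : r = C (r.coeff 0) := eq_C_of_natDegree_eq_zero (by omega)
      set c := r.coeff 0 with hc
      have hconst : r ^ 4 + C (4 * b ^ 4) = C (c ^ 4 + 4 * b ^ 4) := by
        rw [hrc]; rw [← C_pow, ← C_add]
      have hcne : c ^ 4 + 4 * b ^ 4 ≠ 0 := by positivity
      have hle := natDegree_le_of_dvd (hconst ▸ hgr) (C_ne_zero.mpr hcne)
      rw [natDegree_C, hg2] at hle
      omega
    · omega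
  have hr0 : r ≠ 0 := fun h => by simp [h] at hrd1
  have hu0 : r.coeff 1 ≠ 0 := by
    rw [← hrd1]; exact mt leadingCoeff_eq_zero.mp hr0
  -- r^2 - a^2 = C ν * f
  have hd2 : (r ^ 2 - C (a ^ 2)).natDegree = 2 := by
    have h : r ^ 2 - C (a ^ 2) = r ^ 2 + C (-(a ^ 2)) := by
      rw [map_neg]; ring
    rw [h, natDegree_add_C, natDegree_pow, hrd1]
  have hd2ne : r ^ 2 - C (a ^ 2) ≠ 0 := fun h => by rw [h] at hd2; simp at hd2
  obtain ⟨e, he⟩ := hfr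
  have he0 : e ≠ 0 := fun h => hd2ne (by rw [he, h, mul_zero])
  have hed0 : e.natDegree = 0 := by
    have h := natDegree_mul hf0 he0
    rw [← he, hd2, hf2] at h
    omega
  set ν := e.coeff 0 with hν
  have heC : e = C ν := eq_C_of_natDegree_eq_zero hed0
  have hν0 : ν ≠ 0 := fun h => he0 (by rw [heC, h, map_zero])
  have heq : C ν * f = r ^ 2 - C (a ^ 2) := by rw [he, heC]; ring
  -- r^4 + 4 b^4 = g * m with m of degree 2
  obtain ⟨m, hm⟩ := hgr
  have hd4 : (r ^ 4 + C (4 * b ^ 4)).natDegree = 4 := by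
    rw [natDegree_add_C, natDegree_pow, hrd1]
  have hm0 : m ≠ 0 := fun h => by
    rw [h, mul_zero] at hm
    rw [hm] at hd4
    simp at hd4
  have hmd : m.natDegree = 2 := by
    have h := natDegree_mul hg0 hm0
    rw [← hm, hd4, hg2] at h
    omega
  -- key identity
  have hkey : C b * r ^ 2 - C ν * r - C (a ^ 2 * b) = C (ν * a) * g := by
    simp only [map_mul, map_pow] at heq ⊢
    linear_combination (-(C b : ℚ[X])) * heq
  have hmain : (C b * r ^ 2 - C ν * r - C (a ^ 2 * b)) * m =
      C (ν * a) * (r ^ 4 + C (4 * b ^ 4)) := by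
    rw [hkey, mul_assoc, ← hm]
  -- change of variables sending r to X
  set u := r.coeff 1 with hu
  set c0 := r.coeff 0 with hc0
  have hrform : r = C u * X + C c0 := eq_X_add_C_of_natDegree_le_one hr1
  set w : ℚ[X] := C u⁻¹ * X - C (c0 * u⁻¹) with hw
  have hrw : r.comp w = X := by
    rw [hrform]
    simp only [add_comp, mul_comp, C_comp, X_comp, hw]
    rw [mul_sub, ← mul_assoc, ← C_mul, mul_inv_cancel₀ hu0, C_1, one_mul, ← C_mul]
    rw [show u * (c0 * u⁻¹) = c0 by field_simp]
    ring
  have hw1 : w.natDegree ≤ 1 := by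
    apply le_trans (natDegree_sub_le _ _)
    simp only [natDegree_C, max_le_iff]
    refine ⟨le_trans (natDegree_C_mul_le _ _) (by simp), by omega⟩
  have hM2 : (m.comp w).natDegree ≤ 2 := by
    refine le_trans natDegree_comp_le ?_
    rw [hmd]; omega
  have hcomp := congrArg (fun p => p.comp w) hmain
  simp only [mul_comp, sub_comp, add_comp, pow_comp, C_comp, hrw] at hcomp
  set M := m.comp w with hM
  set A := M.coeff 2 with hA
  set B := M.coeff 1 with hB
  set D := M.coeff 0 with hD
  rw [aux_deg2 M hM2, ← hA, ← hB, ← hD] at hcomp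
  -- put into monomial normal form
  have hexp : C (b * A) * X ^ 4 + C (b * B - ν * A) * X ^ 3 +
      C (b * D - ν * B - a ^ 2 * b * A) * X ^ 2 +
      C (-(ν * D) - a ^ 2 * b * B) * X + C (-(a ^ 2 * b * D)) =
      C (ν * a) * X ^ 4 + C (ν * a * (4 * b ^ 4)) := by
    simp only [map_mul, map_add, map_sub, map_neg, map_pow, map_ofNat] at hcomp ⊢
    linear_combination hcomp
  have e4 : b * A = ν * a := by
    have h := congrArg (fun p => p.coeff 4) hexp
    simp only [coeff_add, coeff_C_mul, coeff_X_pow, coeff_C, coeff_X] at h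
    norm_num at h
    linarith
  have e3 : b * B - ν * A = 0 := by
    have h := congrArg (fun p => p.coeff 3) hexp
    simp only [coeff_add, coeff_C_mul, coeff_X_pow, coeff_C, coeff_X] at h
    norm_num at h
    linarith
  have e2 : b * D - ν * B - a ^ 2 * b * A = 0 := by
    have h := congrArg (fun p => p.coeff 2) hexp
    simp only [coeff_add, coeff_C_mul, coeff_X_pow, coeff_C, coeff_X] at h
    norm_num at h
    linarith
  have e1 : -(ν * D) - a ^ 2 * b * B = 0 := by
    have h := congrArg (fun p => p.coeff 1) hexp
    simp only [coeff_add, coeff_C_mul, coeff_X_pow, coeff_C, coeff_X] at h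
    norm_num at h
    linarith
  -- scalar contradiction: a ν² (ν² + 2 a² b²) = 0
  have hS : a * ν ^ 2 * (ν ^ 2 + 2 * a ^ 2 * b ^ 2) = 0 := by
    linear_combination (-(b ^ 3)) * e1 - ν * b ^ 2 * e2 - (ν ^ 2 * b + a ^ 2 * b ^ 3) * e3 -
      (ν ^ 3 + 2 * a ^ 2 * b ^ 2 * ν) * e4
  rcases mul_eq_zero.mp hS with h | h
  · exact (mul_ne_zero ha0 (pow_ne_zero 2 hν0)) h
  · have h1 : ν ^ 2 > 0 := by positivity
    have h2 : a ^ 2 * b ^ 2 ≥ 0 := by positivity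
    linarith
end

section
/- There are no polynomials f, g ∈ ℚ[t] with deg f = 2 and deg g = 3 such that f·g divides f⁴ − 4g² + 4 in ℚ[t]. -/
/-!
Since `f * g ∣ f ^ 4 - 4 * g ^ 2 + 4`, the cubic `g` divides
`f ^ 4 + 4 = ((f + 1) ^ 2 + 1) * ((f - 1) ^ 2 + 1)` (Sophie Germain). Over an ordered field
none of these polynomials has a root, so `g` has no rational root and, being a cubic, is
irreducible, hence prime. Thus `g` divides one of the two quartic factors, whose cofactor is
then linear, giving a rational root of `(f ± 1) ^ 2 + 1`, which is absurd.
-/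

open Polynomial

theorem pow_four_add_four_eq_mul {R : Type*} [CommRing R] (a : R) :
    a ^ 4 + 4 = ((a + 1) ^ 2 + 1) * ((a - 1) ^ 2 + 1) := by
  ring

theorem dvd_pow_four_add_four_of_mul_dvd {R : Type*} [CommRing R] {a b : R}
    (h : a * b ∣ a ^ 4 - 4 * b ^ 2 + 4) : b ∣ a ^ 4 + 4 := by
  have hb : b ∣ a ^ 4 - 4 * b ^ 2 + 4 := (dvd_mul_left b a).trans h
  have hsplit : a ^ 4 + 4 = (a ^ 4 - 4 * b ^ 2 + 4) + b * (4 * b) := by ring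
  rw [hsplit]
  exact dvd_add hb (dvd_mul_right b _)

namespace Polynomial

theorem natDegree_sq_add_one {R : Type*} [Semiring R] [NoZeroDivisors R] {p : R[X]}
    (hp : 0 < p.natDegree) : (p ^ 2 + 1).natDegree = 2 * p.natDegree := by
  rw [natDegree_add_eq_left_of_natDegree_lt, natDegree_pow]
  simpa [natDegree_pow] using hp

theorem exists_isRoot_of_dvd_of_natDegree_eq_add_one {K : Type*} [Field K] {g p : K[X]}
    (hdvd : g ∣ p) (hp : p ≠ 0) (hdeg : p.natDegree = g.natDegree + 1) : ∃ x, p.IsRoot x := by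
  obtain ⟨q, rfl⟩ := hdvd
  have hq_deg : q.natDegree = 1 := by
    rw [natDegree_mul (left_ne_zero_of_mul hp) (right_ne_zero_of_mul hp)] at hdeg
    omega
  obtain ⟨x, hx⟩ :=
    exists_root_of_degree_eq_one ((degree_eq_iff_natDegree_eq_of_pos one_pos).mpr hq_deg)
  exact ⟨x, hx.dvd (dvd_mul_left q g)⟩

section Ordered

variable {K : Type*} [Field K] [LinearOrder K] [IsStrictOrderedRing K]

theorem not_isRoot_sq_add_one (p : K[X]) (x : K) : ¬ (p ^ 2 + 1).IsRoot x := by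
  simp only [IsRoot.def, eval_add, eval_pow, eval_one]
  positivity

theorem not_isRoot_pow_four_add_four (p : K[X]) (x : K) : ¬ (p ^ 4 + 4).IsRoot x := by
  simp only [IsRoot.def, eval_add, eval_pow, eval_ofNat]
  positivity

theorem not_dvd_sq_add_one {g p : K[X]} (hdeg : 2 * p.natDegree = g.natDegree + 1) :
    ¬ g ∣ p ^ 2 + 1 := by
  intro hdvd
  have hp_ne : p ^ 2 + 1 ≠ 0 := fun h => not_isRoot_sq_add_one p 0 (by simp [h])
  obtain ⟨x, hx⟩ := exists_isRoot_of_dvd_of_natDegree_eq_add_one hdvd hp_ne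
    (by rw [natDegree_sq_add_one (by omega), hdeg])
  exact not_isRoot_sq_add_one p x hx

end Ordered

end Polynomial

theorem quartic_congruence_no_sol_deg2_deg3 :
    ¬ ∃ f g : ℚ[X], f.natDegree = 2 ∧ g.natDegree = 3 ∧
        f * g ∣ f ^ 4 - 4 * g ^ 2 + 4 := by
  rintro ⟨f, g, hf, hg, hdvd⟩
  have hg_dvd : g ∣ f ^ 4 + 4 := dvd_pow_four_add_four_of_mul_dvd hdvd
  have hg_roots : g.roots = 0 := Multiset.eq_zero_of_forall_notMem fun x hx =>
    not_isRoot_pow_four_add_four f x ((isRoot_of_mem_roots hx).dvd hg_dvd)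
  have hg_prime : Prime g :=
    ((irreducible_iff_roots_eq_zero_of_degree_le_three (by omega) (by omega)).mpr hg_roots).prime
  rw [pow_four_add_four_eq_mul] at hg_dvd
  have hf_add : (f + 1).natDegree = 2 := by rw [← C_1, natDegree_add_C, hf]
  have hf_sub : (f - 1).natDegree = 2 := by rw [← C_1, natDegree_sub_C, hf]
  rcases hg_prime.dvd_or_dvd hg_dvd with h | h
  · exact not_dvd_sq_add_one (by rw [hf_add, hg]) h
  · exact not_dvd_sq_add_one (by rw [hf_sub, hg]) h
end

section
/- There are no polynomials f, g ∈ ℚ[t] with deg f = 2 and deg g = 5 such that f·g divides f⁴ − 4g² + 4 in ℚ[t]. -/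
open Polynomial

/-- Every real polynomial of degree 3 has a real root. -/
lemma cubic_has_real_root (P : ℝ[X]) (hP : P.natDegree = 3) : ∃ r : ℝ, P.eval r = 0 := by
  -- reduce to the case of positive leading coefficient
  have key : ∀ Q : ℝ[X], Q.natDegree = 3 → 0 < Q.leadingCoeff → ∃ r : ℝ, Q.eval r = 0 := by
    intro Q hQ hlc
    have hQ0 : Q ≠ 0 := fun h => by simp [h] at hQ
    have hdeg : 0 < Q.degree := by
      rw [Polynomial.degree_eq_natDegree hQ0, hQ]
      exact_mod_cast Nat.zero_lt_succ _
    -- Q → +∞ at +∞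
    have h1 : Filter.Tendsto (fun x => Q.eval x) Filter.atTop Filter.atTop :=
      Q.tendsto_atTop_of_leadingCoeff_nonneg hdeg hlc.le
    -- Q ∘ (-X) → -∞ at +∞
    set R : ℝ[X] := Q.comp (-X) with hR
    have hXdeg : (-X : ℝ[X]).natDegree = 1 := by simp
    have hRdeg : R.natDegree = 3 := by
      rw [hR, Polynomial.natDegree_comp, hXdeg, hQ, mul_one]
    have hR0 : R ≠ 0 := fun h => by simp [h] at hRdeg
    have hRlc : R.leadingCoeff = -Q.leadingCoeff := by
      rw [hR, Polynomial.leadingCoeff_comp (by rw [hXdeg]; norm_num), hQ]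
      have : (-X : ℝ[X]).leadingCoeff = -1 := by
        simpa using (Polynomial.leadingCoeff_neg (X : ℝ[X]))
      rw [this]
      ring
    have hdegR : 0 < R.degree := by
      rw [Polynomial.degree_eq_natDegree hR0, hRdeg]
      exact_mod_cast Nat.zero_lt_succ _
    have h2 : Filter.Tendsto (fun x => R.eval x) Filter.atTop Filter.atBot :=
      R.tendsto_atBot_of_leadingCoeff_nonpos hdegR (by rw [hRlc]; linarith)
    obtain ⟨a, ha⟩ := (h1.eventually_ge_atTop 1).exists
    obtain ⟨b, hb⟩ := (h2.eventually_le_atBot (-1)).exists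
    have hbval : Q.eval (-b) ≤ -1 := by
      have : R.eval b = Q.eval (-b) := by simp [hR]
      linarith [this ▸ hb]
    have hcont : Continuous fun x => Q.eval x := Q.continuous
    have := intermediate_value_univ (-b) a (f := fun x => Q.eval x) hcont
    have h0 : (0 : ℝ) ∈ Set.Icc (Q.eval (-b)) (Q.eval a) := ⟨by linarith, by linarith⟩
    obtain ⟨r, hr⟩ := this h0
    exact ⟨r, hr⟩
  have hP0 : P ≠ 0 := fun h => by simp [h] at hP
  rcases lt_trichotomy 0 P.leadingCoeff with hlc | hlc | hlc
  · exact key P hP hlc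
  · exact absurd hlc.symm (Polynomial.leadingCoeff_ne_zero.mpr hP0)
  · obtain ⟨r, hr⟩ := key (-P) (by simpa using hP) (by simpa using hlc)
    exact ⟨r, by simpa using hr⟩

theorem quartic_congruence_no_sol_deg2_deg5 :
    ¬ ∃ f g : ℚ[X], f.natDegree = 2 ∧ g.natDegree = 5 ∧
        f * g ∣ f ^ 4 - 4 * g ^ 2 + 4 := by
  rintro ⟨f, g, hf, hg, q, hq⟩
  have hf0 : f ≠ 0 := fun h => by simp [h] at hf
  have hg0 : g ≠ 0 := fun h => by simp [h] at hg
  set h : ℚ[X] := 4 * g + f * q with hh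
  have key : g * h = f ^ 4 + 4 := by
    rw [hh]; linear_combination -hq
  -- degree of f^4 + 4 is 8
  have hdeg4 : (f ^ 4 + 4 : ℚ[X]).natDegree = 8 := by
    have h4 : (4 : ℚ[X]) = C (4 : ℚ) := (map_ofNat Polynomial.C 4).symm
    have hpow : (f ^ 4).natDegree = 8 := by
      rw [Polynomial.natDegree_pow, hf]
    rw [h4, Polynomial.natDegree_add_C, hpow]
  have hrhs0 : (f ^ 4 + 4 : ℚ[X]) ≠ 0 := fun h0 => by
    rw [h0] at hdeg4; simp at hdeg4
  have hh0 : h ≠ 0 := by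
    intro h0
    rw [h0, mul_zero] at key
    exact hrhs0 key.symm
  have hdegh : h.natDegree = 3 := by
    have := Polynomial.natDegree_mul hg0 hh0
    rw [key, hdeg4, hg] at this
    omega
  -- map to ℝ
  set φ := algebraMap ℚ ℝ with hφ
  have hHdeg : (h.map φ).natDegree = 3 := by
    rw [Polynomial.natDegree_map, hdegh]
  obtain ⟨r, hr⟩ := cubic_has_real_root (h.map φ) hHdeg
  have := congrArg (fun p : ℚ[X] => (p.map φ).eval r) key
  simp only [Polynomial.map_mul, Polynomial.map_add, Polynomial.map_pow,
    Polynomial.eval_mul, Polynomial.eval_add, Polynomial.eval_pow] at this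
  rw [hr, mul_zero] at this
  have h4 : ((4 : ℚ[X]).map φ).eval r = 4 := by norm_num
  rw [h4] at this
  nlinarith [sq_nonneg (((f.map φ).eval r) ^ 2), sq_nonneg ((f.map φ).eval r)]
end

section
/- There are no polynomials f, g ∈ ℚ[t] with deg f = 2 and deg g = 7 such that f·g divides f⁴ − 4g² + 4 in ℚ[t]. (Indeed, such a pair would force f⁴ + 4 = g·L with deg L = 1, and then the rational root r of L would give a rational root f(r) of X⁴ + 4, which is impossible.) -/
open Polynomial

theorem quartic_congruence_no_sol_deg2_deg7 :
    ¬ ∃ f g : ℚ[X], f.natDegree = 2 ∧ g.natDegree = 7 ∧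
        f * g ∣ f ^ 4 - 4 * g ^ 2 + 4 := by
  rintro ⟨f, g, hf, hg, hdvd⟩
  have hg0 : g ≠ 0 := by
    intro h; rw [h] at hg; simp at hg
  have hf0 : f ≠ 0 := by
    intro h; rw [h] at hf; simp at hf
  -- g divides f^4 + 4
  have hgdvd : g ∣ f ^ 4 + 4 := by
    have h1 : g ∣ f ^ 4 - 4 * g ^ 2 + 4 := dvd_trans (dvd_mul_left g f) hdvd
    have h2 : g ∣ 4 * g ^ 2 := Dvd.intro_left (4 * g) (by ring)
    have := dvd_add h1 h2
    convert this using 1; ring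
  obtain ⟨L, hL⟩ := hgdvd
  -- degree of f^4 + 4 is 8
  have hdeg : (f ^ 4 + 4).natDegree = 8 := by
    have h4 : (f ^ 4).natDegree = 8 := by
      rw [natDegree_pow, hf]
    rw [natDegree_add_eq_left_of_natDegree_lt, h4]
    rw [h4]
    have : (4 : ℚ[X]).natDegree = 0 := natDegree_ofNat 4
    omega
  have hne : f ^ 4 + 4 ≠ 0 := by
    intro h; rw [h] at hdeg; simp at hdeg
  have hL0 : L ≠ 0 := by
    intro h; rw [h, mul_zero] at hL; exact hne hL
  have hLdeg : L.natDegree = 1 := by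
    have := natDegree_mul hg0 hL0
    rw [← hL, hdeg, hg] at this
    omega
  obtain ⟨a, b, rfl⟩ := exists_eq_X_add_C_of_natDegree_le_one (le_of_eq hLdeg)
  have ha0 : a ≠ 0 := by
    intro h
    rw [h, map_zero, zero_mul, zero_add, natDegree_C] at hLdeg
    omega
  set r : ℚ := -b / a with hr
  have := congrArg (Polynomial.eval r) hL
  simp at this
  have hz : a * r + b = 0 := by
    rw [hr]; field_simp; ring
  rw [hz, mul_zero] at this
  nlinarith [sq_nonneg (f.eval r ^ 2), sq_nonneg (f.eval r)]
end

section
/- Let f, g ∈ ℚ[t] be polynomials with deg f = 2 and deg g = 8. If f·g divides f⁴ − 4g² + 4 in ℚ[t], then g = (1/4)(f⁴ + 4) or g = −(1/4)(f⁴ + 4). -/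
open Polynomial

theorem quartic_congruence_deg2_deg8 (f g : ℚ[X])
    (hf : f.natDegree = 2) (hg : g.natDegree = 8)
    (hdvd : f * g ∣ f ^ 4 - 4 * g ^ 2 + 4) :
    g = C (1/4 : ℚ) * (f ^ 4 + 4) ∨ g = -(C (1/4 : ℚ) * (f ^ 4 + 4)) := by
  have hf0 : f ≠ 0 := by intro h; simp [h] at hf
  have hg0 : g ≠ 0 := by intro h; simp [h] at hg
  -- f^4 + 4 has natDegree 8
  have h4 : (4 : ℚ[X]) = C 4 := (map_ofNat C 4).symm
  have hdeg4 : (f ^ 4 + 4).natDegree = 8 := by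
    rw [h4, natDegree_add_C, natDegree_pow, hf]
  have hne : f ^ 4 + 4 ≠ 0 := by
    intro h; rw [h] at hdeg4; simp at hdeg4
  -- g divides f^4 + 4
  have hgd : g ∣ f ^ 4 + 4 := by
    have h1 : g ∣ f ^ 4 - 4 * g ^ 2 + 4 := dvd_trans (dvd_mul_left g f) hdvd
    have h2 : g ∣ 4 * g ^ 2 := by
      exact Dvd.dvd.mul_left (dvd_pow_self g (by norm_num)) 4
    have := dvd_add h1 h2
    have heq : f ^ 4 - 4 * g ^ 2 + 4 + 4 * g ^ 2 = f ^ 4 + 4 := by ring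
    rwa [heq] at this
  obtain ⟨q, hq⟩ := hgd
  have hq0 : q ≠ 0 := by
    intro h; rw [h, mul_zero] at hq; exact hne hq
  have hqdeg : q.natDegree = 0 := by
    have := hdeg4
    rw [hq, natDegree_mul hg0 hq0, hg] at this
    omega
  obtain ⟨c, hc⟩ := natDegree_eq_zero.mp hqdeg
  have hc0 : c ≠ 0 := by
    intro h; rw [h, map_zero] at hc; exact hq0 hc.symm
  -- f divides q - 4g
  have hfd : f ∣ q - 4 * g := by
    have heq : f ^ 4 - 4 * g ^ 2 + 4 = g * (q - 4 * g) := by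
      have : f ^ 4 + 4 = g * q := hq
      linear_combination this
    rw [heq, mul_comm f g] at hdvd
    exact (mul_dvd_mul_iff_left hg0).mp hdvd
  -- f divides C (c^2 - 16)
  have hfc : f ∣ C (c ^ 2 - 16) := by
    have h1 : f ∣ C c * (q - 4 * g) := Dvd.dvd.mul_left hfd (C c)
    have h2 : f ∣ 4 * f ^ 4 := Dvd.dvd.mul_left (dvd_pow_self f (by norm_num)) 4
    have heq : C (c ^ 2 - 16) = C c * (q - 4 * g) + 4 * f ^ 4 := by
      rw [map_sub, map_pow, hc, (map_ofNat C 16 : (C (16:ℚ) : ℚ[X]) = 16)]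
      linear_combination (-4 : ℚ[X]) * hq
    rw [heq]
    exact dvd_add h1 h2
  have hcsq : c ^ 2 = 16 := by
    by_contra hne16
    have hCne : C (c ^ 2 - 16) ≠ 0 := by
      simp only [ne_eq, C_eq_zero, sub_eq_zero]; exact hne16
    have := natDegree_le_of_dvd hfc hCne
    rw [hf, natDegree_C] at this
    omega
  have hc4 : c = 4 ∨ c = -4 := by
    have : (c - 4) * (c + 4) = 0 := by ring_nf; linarith [hcsq]
    rcases mul_eq_zero.mp this with h | h
    · left; linarith
    · right; linarith
  -- g = (f^4+4)/c
  have hgval : g = C (1/c) * (f ^ 4 + 4) := by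
    rw [hq, ← hc, mul_comm g (C c), ← mul_assoc, ← map_mul,
      one_div, inv_mul_cancel₀ hc0, map_one, one_mul]
  rcases hc4 with h | h
  · left; rw [hgval, h]
  · right; rw [hgval, h]
    have : (1:ℚ) / (-4) = -(1/4) := by norm_num
    rw [this, map_neg, neg_mul]
end

section
/- Let d be an integer with d ≠ −3 and let (x, y) ∈ ℤ² satisfy x³ + y³ + d·x·y + 1 = 0. Set d₁ = 3x + 3y − d. Then d₁ ≠ 0, d₁ divides d³ + 27, and x satisfies the quadratic relation (18·d₁·x − 3·d·d₁ − 3·d₁²)² = −27·d²·d₁² − 18·d·d₁³ − 3·d₁⁴ − 12·(d³ + 27)·d₁; moreover 3y = d + d₁ − 3x. (This rests on the polynomial identity 27(x³ + y³ + dxy + 1) − (d² + 3dx + 9x² + 3dy − 9xy + 9y²)(3x + 3y − d) = d³ + 27.) -/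
theorem Hd_integral_points (d : ℤ) (hd : d ≠ -3) (x y : ℤ)
    (hxy : x ^ 3 + y ^ 3 + d * x * y + 1 = 0) :
    let d₁ : ℤ := 3 * x + 3 * y - d
    d₁ ≠ 0 ∧ d₁ ∣ d ^ 3 + 27 ∧
      (18 * d₁ * x - 3 * d * d₁ - 3 * d₁ ^ 2) ^ 2 =
        -27 * d ^ 2 * d₁ ^ 2 - 18 * d * d₁ ^ 3 - 3 * d₁ ^ 4
          - 12 * (d ^ 3 + 27) * d₁ ∧
      3 * y = d + d₁ - 3 * x := by
  intro d₁
  refine ⟨?_, ⟨-(d ^ 2 + 3*d*x + 9*x^2 + 3*d*y - 9*x*y + 9*y^2), by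
    show d ^ 3 + 27 = (3 * x + 3 * y - d) *
      (-(d ^ 2 + 3*d*x + 9*x^2 + 3*d*y - 9*x*y + 9*y^2))
    linear_combination 27 * hxy⟩, by
    show (18 * (3*x+3*y-d) * x - 3 * d * (3*x+3*y-d) - 3 * (3*x+3*y-d) ^ 2) ^ 2 =
        -27 * d ^ 2 * (3*x+3*y-d) ^ 2 - 18 * d * (3*x+3*y-d) ^ 3 - 3 * (3*x+3*y-d) ^ 4
          - 12 * (d ^ 3 + 27) * (3*x+3*y-d)
    linear_combination (972*x + 972*y - 324*d) * hxy, by show 3*y = d + (3*x+3*y-d) - 3*x; ring⟩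
  intro h
  have h' : (3 : ℤ) * x + 3 * y - d = 0 := h
  have hc : (d + 3) * (d ^ 2 - 3 * d + 9) = 0 := by
    linear_combination 27 * hxy - (d ^ 2 + 3*d*x + 9*x^2 + 3*d*y - 9*x*y + 9*y^2) * h'
  rcases mul_eq_zero.1 hc with h1 | h2
  · exact hd (by linarith)
  · nlinarith [sq_nonneg (d - 3), sq_nonneg d]
end

section
/- Let T be an even integer with T ≠ 8 and T ≠ −8, and let (x, y) ∈ ℤ² satisfy (x + y)⁴ − 4x²y² + T·x·y·(x + y) + 4 = 0. Set d₁ = 8x² + 32xy + 8y² − 2Tx − 2Ty + T²/4 and N = (T² + 64)(T − 8)(T + 8)/16 (both are integers since T is even). Then d₁ ≠ 0, d₁ divides N, and 16·(x + y)²·d₁ = d₁² + N − (T²/2)·d₁, i.e. (4x + 4y)² = d₁ + N/d₁ − T²/2. (This rests on the identity (8x² + 32xy + 8y² − 2Tx − 2Ty + T²/4)·(8x² + 8y² + 2Tx + 2Ty + T²/4) = N, valid for integer points on the curve.) -/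
theorem XT_integral_points (T : ℤ) (hT : Even T) (h8 : T ≠ 8) (h8' : T ≠ -8)
    (x y : ℤ)
    (hxy : (x + y) ^ 4 - 4 * x ^ 2 * y ^ 2 + T * x * y * (x + y) + 4 = 0) :
    let d₁ : ℤ := 8 * x ^ 2 + 32 * x * y + 8 * y ^ 2 - 2 * T * x - 2 * T * y + T ^ 2 / 4
    let N : ℤ := (T ^ 2 + 64) * (T - 8) * (T + 8) / 16
    d₁ ≠ 0 ∧ d₁ ∣ N ∧
      16 * (x + y) ^ 2 * d₁ = d₁ ^ 2 + N - (T ^ 2 / 2) * d₁ := by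
  obtain ⟨t, rfl⟩ := hT
  intro d₁ N
  have e4 : (t + t) ^ 2 / 4 = t ^ 2 := by
    rw [show (t + t) ^ 2 = 4 * t ^ 2 by ring]
    exact Int.mul_ediv_cancel_left _ (by norm_num)
  have e2 : (t + t) ^ 2 / 2 = 2 * t ^ 2 := by
    rw [show (t + t) ^ 2 = 2 * (2 * t ^ 2) by ring]
    exact Int.mul_ediv_cancel_left _ (by norm_num)
  have eN : N = t ^ 4 - 256 := by
    show ((t + t) ^ 2 + 64) * ((t + t) - 8) * ((t + t) + 8) / 16 = t ^ 4 - 256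
    rw [show ((t + t) ^ 2 + 64) * ((t + t) - 8) * ((t + t) + 8)
        = 16 * (t ^ 4 - 256) by ring]
    exact Int.mul_ediv_cancel_left _ (by norm_num)
  have ed : d₁ = 8 * x ^ 2 + 32 * x * y + 8 * y ^ 2 - 2 * (t + t) * x - 2 * (t + t) * y
      + t ^ 2 := by
    show _ - _ - _ + (t + t) ^ 2 / 4 = _
    rw [e4]
  clear_value d₁ N
  subst ed eN
  set d₁ : ℤ := 8 * x ^ 2 + 32 * x * y + 8 * y ^ 2 - 2 * (t + t) * x - 2 * (t + t) * y
      + t ^ 2 with hd1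
  set d₂ : ℤ := 8 * x ^ 2 + 8 * y ^ 2 + 2 * (t + t) * x + 2 * (t + t) * y + t ^ 2 with hd2
  have hkey : d₁ * d₂ = t ^ 4 - 256 := by
    rw [hd1, hd2]; linear_combination 64 * hxy
  have hne : d₁ ≠ 0 := by
    intro h0
    have h1 : (t - 4) * (t + 4) * (t ^ 2 + 16) = 0 := by
      linear_combination d₂ * h0 - hkey
    have h2 : t ^ 2 + 16 ≠ 0 := by positivity
    rcases mul_eq_zero.mp h1 with h | h
    · rcases mul_eq_zero.mp h with h | h
      · exact h8 (by omega)
      · exact h8' (by omega)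
    · exact h2 h
  refine ⟨hne, ⟨d₂, hkey.symm⟩, ?_⟩
  rw [e2]
  linear_combination hkey
end

section
/- Let a, b be integers with a⁴ ≠ 1024·b, and let g = gcd(32, gcd(8a, a²)) (the positive greatest common divisor in ℤ). Let (x, y) ∈ ℤ² satisfy x⁴ − 4y² + a·x·y + b = 0. Then g divides 32x² − 8ax + 64y + a², the integer d₁ = (32x² − 8ax + 64y + a²)/g is nonzero, g² divides a⁴ − 1024b, d₁ divides (a⁴ − 1024b)/g², and 64·x²·(d₁·g) = (d₁·g)² + (a⁴ − 1024b) − 2a²·(d₁·g), i.e. 64x² = d₁·g + (a⁴ − 1024b)/(d₁·g) − 2a². (This rests on the identity (32x² − 8ax + 64y + a²)·(32x² + 8ax − 64y + a²) = a⁴ − 1024b, valid for integer points on the curve.) -/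
/-!
On the curve, `D = 32x² − 8ax + 64y + a²` and its conjugate `D' = 32x² + 8ax − 64y + a²` (obtained by
`(x, y) ↦ (−x, −y)`) satisfy `D·D' = a⁴ − 1024b` and `D + D' = 64x² + 2a²`. The gcd `g` divides `32`,
`8a` and `a²`, hence both factors, so `g²` divides their product and `D/g` divides `(a⁴ − 1024b)/g²`;
eliminating `D'` from the two relations gives the stated equation for `64x²`.
-/

def qabFactor (a x y : ℤ) : ℤ := 32 * x ^ 2 - 8 * a * x + 64 * y + a ^ 2

theorem qabFactor_mul_qabFactor_neg {a b x y : ℤ} (hxy : x ^ 4 - 4 * y ^ 2 + a * x * y + b = 0) :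
    qabFactor a x y * qabFactor a (-x) (-y) = a ^ 4 - 1024 * b := by
  unfold qabFactor
  linear_combination 1024 * hxy

theorem qabFactor_add_qabFactor_neg (a x y : ℤ) :
    qabFactor a x y + qabFactor a (-x) (-y) = 64 * x ^ 2 + 2 * a ^ 2 := by
  unfold qabFactor
  ring

theorem gcd_dvd_qabFactor (a x y : ℤ) :
    (Int.gcd 32 (Int.gcd (8 * a) (a ^ 2) : ℤ) : ℤ) ∣ qabFactor a x y := by
  set g : ℤ := ↑(Int.gcd 32 (Int.gcd (8 * a) (a ^ 2) : ℤ))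
  have h32 : g ∣ 32 := Int.gcd_dvd_left _ _
  have hinner : g ∣ (Int.gcd (8 * a) (a ^ 2) : ℤ) := Int.gcd_dvd_right _ _
  have h8a : g ∣ 8 * a := hinner.trans (Int.gcd_dvd_left _ _)
  have ha2 : g ∣ a ^ 2 := hinner.trans (Int.gcd_dvd_right _ _)
  have hsplit : qabFactor a x y = 32 * (x ^ 2 + 2 * y) + 8 * a * (-x) + a ^ 2 := by
    unfold qabFactor
    ring
  rw [hsplit]
  exact ((h32.mul_right _).add (h8a.mul_right _)).add ha2

theorem Int.ediv_dvd_mul_ediv_sq {g m n : ℤ} (hm : g ∣ m) (hn : g ∣ n) :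
    m / g ∣ m * n / g ^ 2 := by
  obtain ⟨k, rfl⟩ := hm
  obtain ⟨l, rfl⟩ := hn
  rcases eq_or_ne g 0 with rfl | hg
  · simp
  rw [show g * k * (g * l) = k * l * g ^ 2 by ring, Int.mul_ediv_cancel _ (pow_ne_zero 2 hg),
    Int.mul_ediv_cancel_left _ hg]
  exact dvd_mul_right k l

theorem Qab_integral_points (a b : ℤ) (hab : a ^ 4 ≠ 1024 * b)
    (x y : ℤ) (hxy : x ^ 4 - 4 * y ^ 2 + a * x * y + b = 0) :
    let g : ℤ := Int.gcd 32 (Int.gcd (8 * a) (a ^ 2) : ℤ)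
    let d₁ : ℤ := (32 * x ^ 2 - 8 * a * x + 64 * y + a ^ 2) / g
    g ∣ 32 * x ^ 2 - 8 * a * x + 64 * y + a ^ 2 ∧
      d₁ ≠ 0 ∧
      g ^ 2 ∣ a ^ 4 - 1024 * b ∧
      d₁ ∣ (a ^ 4 - 1024 * b) / g ^ 2 ∧
      64 * x ^ 2 * (d₁ * g) =
        (d₁ * g) ^ 2 + (a ^ 4 - 1024 * b) - 2 * a ^ 2 * (d₁ * g) := by
  intro g d₁
  have hD : g ∣ qabFactor a x y := gcd_dvd_qabFactor a x y
  have hD' : g ∣ qabFactor a (-x) (-y) := gcd_dvd_qabFactor a (-x) (-y)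
  have hprod := qabFactor_mul_qabFactor_neg hxy
  have hd₁ : d₁ * g = qabFactor a x y := Int.ediv_mul_cancel hD
  refine ⟨hD, ?_, hprod ▸ pow_two g ▸ mul_dvd_mul hD hD', hprod ▸ Int.ediv_dvd_mul_ediv_sq hD hD', ?_⟩
  · intro hzero
    rw [hzero, zero_mul] at hd₁
    rw [← hd₁, zero_mul] at hprod
    exact hab (by linarith)
  · rw [hd₁]
    linear_combination hprod - qabFactor a x y * qabFactor_add_qabFactor_neg a x y
end
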